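/- arXiv:1603.07868 — 14 statements merged into one kernel-verified Lean document; each statement's English description precedes it below -/
import Mathlib

section
/- The inverse signed total domination number of the complete graph K_n (n ≥ 2) equals -2 if n is even and -1 if n is odd. -/
open SimpleGraph Finset

lemma top_neighborFinset_eq (n : ℕ) (v : Fin n) :
    (⊤ : SimpleGraph (Fin n)).neighborFinset v = Finset.univ.erase v := by
  ext u
  simp [mem_neighborFinset, top_adj, eq_comm, ne_comm]

lemma sum_ite_fin (n k : ℕ) (hk : k ≤ n) :
    ∑ v : Fin n, (if (v : ℕ) < k then (-1 : ℤ) else 1) = (n : ℤ) - 2 * k := by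
  rw [Fin.sum_univ_eq_sum_range (fun i => if i < k then (-1 : ℤ) else 1)]
  rw [Finset.range_eq_Ico, ← Finset.sum_Ico_consecutive _ (Nat.zero_le k) hk,
    ← Finset.range_eq_Ico]
  have h1 : ∑ i ∈ Finset.range k, (if i < k then (-1 : ℤ) else 1) = -(k : ℤ) := by
    rw [Finset.sum_congr rfl (fun i hi => if_pos (Finset.mem_range.mp hi))]; simp
  have h2 : ∑ i ∈ Finset.Ico k n, (if i < k then (-1 : ℤ) else 1) = ((n - k : ℕ) : ℤ) := by
    rw [Finset.sum_congr rfl (fun i hi => if_neg (by simp only [Finset.mem_Ico] at hi; omega))]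
    simp
  rw [h1, h2]; omega

/-- The inverse signed total domination number of the complete graph `K_n` (`n ≥ 2`)
equals `-2` if `n` is even and `-1` if `n` is odd. -/
theorem istdn_completeGraph (n : ℕ) (hn : 2 ≤ n) :
    IsGreatest {w : ℤ | ∃ f : Fin n → ℤ,
        (∀ v, f v = 1 ∨ f v = -1) ∧
        (∀ v : Fin n, ∑ u ∈ (⊤ : SimpleGraph (Fin n)).neighborFinset v, f u ≤ 0) ∧
        w = ∑ v, f v}
      (if Even n then -2 else -1) := by
  constructor
  · -- membership
    set k : ℕ := if Even n then n / 2 + 1 else (n + 1) / 2 with hk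
    have hkn : k ≤ n := by
      rcases Nat.even_or_odd n with h | h
      · simp [hk, h]; omega
      · rw [hk, if_neg (by simpa [Nat.odd_iff, Nat.even_iff] using h)]; omega
    have hk1 : 1 ≤ k := by
      rcases Nat.even_or_odd n with h | h
      · simp [hk, h]
      · rw [hk, if_neg (by simpa [Nat.odd_iff, Nat.even_iff] using h)]; omega
    have hsum : ∑ v : Fin n, (if (v : ℕ) < k then (-1 : ℤ) else 1) = (n : ℤ) - 2 * k :=
      sum_ite_fin n k hkn
    have hle : (n : ℤ) - 2 * k ≤ -1 := by
      rcases Nat.even_or_odd n with h | h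
      · rw [Nat.even_iff] at h; simp only [hk, if_pos (Nat.even_iff.mpr h)]; push_cast; omega
      · rw [Nat.odd_iff] at h
        rw [hk, if_neg (by simp [Nat.even_iff, h])]; push_cast; omega
    refine ⟨fun v => if (v : ℕ) < k then -1 else 1, fun v => by dsimp only; split <;> simp, ?_, ?_⟩
    · intro v
      rw [top_neighborFinset_eq, Finset.sum_erase_eq_sub (Finset.mem_univ v), hsum]
      split <;> omega
    · rw [hsum]
      rcases Nat.even_or_odd n with h | h
      · rw [if_pos h]
        have h2 := Nat.even_iff.mp h
        simp only [hk, if_pos h]; push_cast; omega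
      · have h2 := Nat.odd_iff.mp h
        have hne : ¬ Even n := by simp [Nat.even_iff, h2]
        rw [if_neg hne]
        simp only [hk, if_neg hne]; push_cast; omega
  · rintro w ⟨f, hf1, hf2, hw⟩
    have hS : ∀ v : Fin n, ∑ u, f u ≤ f v + 0 := by
      intro v
      have := hf2 v
      rw [top_neighborFinset_eq, Finset.sum_erase_eq_sub (Finset.mem_univ v)] at this
      linarith
    have hneg : ∃ v : Fin n, f v = -1 := by
      by_contra h
      push_neg at h
      have hall : ∀ v, f v = 1 := fun v => (hf1 v).resolve_right (h v)
      have : ∑ v, f v = (n : ℤ) := by simp [hall]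
      have h0 := hS ⟨0, by omega⟩
      rw [hall, this] at h0
      omega
    obtain ⟨v0, hv0⟩ := hneg
    have h1 : ∑ v, f v ≤ -1 := by have := hS v0; rw [hv0] at this; linarith
    have hpar : Even (∑ v, f v + n) := by
      have : ∑ v, f v + (n : ℤ) = ∑ v, (f v + 1) := by
        rw [Finset.sum_add_distrib]; simp
      rw [this]
      exact Finset.even_sum _ fun v _ => by rcases hf1 v with h | h <;> simp [h]
    rw [Int.even_iff] at hpar
    rw [hw]
    rcases Nat.even_or_odd n with h | h
    · rw [if_pos h]
      rw [Nat.even_iff] at h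
      omega
    · rw [if_neg (by simpa [Nat.odd_iff, Nat.even_iff] using h)]
      exact h1
end

section
/- The inverse signed total domination number of the cycle C_n (n ≥ 3) equals 0 if n ≡ 0 (mod 4), -1 if n is odd, and -2 if n ≡ 2 (mod 4). -/
/-!
Summing the neighbourhood condition over the 2-regular graph `C_n` gives `2 w(f) ≤ 0`, and
`w(f) ≡ n (mod 2)` since `f` is `±1`-valued. If `n ≡ 2 (mod 4)`, then `w(f) = 0` would force
every neighbourhood sum to vanish, i.e. `f (v + 2) = - f v`; going once around the cycle takes
`n / 2` such steps, an odd number, so `f = -f`, which is impossible. The bounds are attained by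
the sign pattern `+ + - - + + - - ⋯`.
-/

open SimpleGraph Finset

theorem Int.sum_modEq_card_of_forall_eq_one_or_eq_neg_one {ι : Type*} [Fintype ι] {f : ι → ℤ}
    (hf : ∀ i, f i = 1 ∨ f i = -1) : ∑ i, f i ≡ Fintype.card ι [ZMOD 2] := by
  rw [Fintype.card_eq_sum_ones, Nat.cast_sum]
  refine Int.ModEq.sum fun i _ => ?_
  rcases hf i with h | h <;> rw [h] <;> decide

open scoped Fin.CommRing in
theorem Function.Antiperiodic.eq_zero_of_mod_four_eq_two {N : ℕ} [NeZero N] {f : Fin N → ℤ}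
    (h : Function.Antiperiodic f 2) (hN : N % 4 = 2) (x : Fin N) : f x = 0 := by
  have hperiod : (2 * (N / 4) + 1) • (2 : Fin N) = 0 := by
    rw [nsmul_eq_mul, ← Nat.cast_ofNat (R := Fin N) (n := 2), ← Nat.cast_mul,
      show (2 * (N / 4) + 1) * 2 = N by omega, Fin.natCast_self]
  have := h.odd_nsmul_antiperiodic (N / 4) x
  rw [hperiod, add_zero] at this
  omega

theorem sum_range_ite_mod_four_lt_two (M : ℕ) :
    ∑ i ∈ range M, (if i % 4 < 2 then 1 else -1 : ℤ) =
      if M % 4 = 0 then 0 else if M % 4 = 2 then 2 else 1 := by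
  induction M with
  | zero => rfl
  | succ M ih => rw [sum_range_succ, ih]; split_ifs <;> omega

namespace SimpleGraph

variable {V : Type*} [Fintype V]

def IsInverseSignedTotalDominating (G : SimpleGraph V) [DecidableRel G.Adj] (f : V → ℤ) :
    Prop :=
  (∀ v, f v = 1 ∨ f v = -1) ∧ ∀ v, ∑ u ∈ G.neighborFinset v, f u ≤ 0

theorem sum_sum_neighborFinset {M : Type*} [AddCommMonoid M] (G : SimpleGraph V)
    [DecidableRel G.Adj] (f : V → M) :
    ∑ v, ∑ u ∈ G.neighborFinset v, f u = ∑ u, G.degree u • f u := by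
  simp_rw [neighborFinset_eq_filter, sum_filter]
  rw [sum_comm]
  refine sum_congr rfl fun u _ => ?_
  rw [← sum_filter, sum_const, ← card_neighborFinset_eq_degree, neighborFinset_eq_filter]
  simp_rw [adj_comm]

theorem IsRegularOfDegree.sum_sum_neighborFinset {M : Type*} [AddCommMonoid M]
    {G : SimpleGraph V} [DecidableRel G.Adj] {d : ℕ} (hG : G.IsRegularOfDegree d) (f : V → M) :
    ∑ v, ∑ u ∈ G.neighborFinset v, f u = d • ∑ u, f u := by
  simp_rw [G.sum_sum_neighborFinset, hG.degree_eq, smul_sum]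

namespace IsInverseSignedTotalDominating

variable {G : SimpleGraph V} [DecidableRel G.Adj] {f : V → ℤ} {d : ℕ}

theorem sum_nonpos (hf : G.IsInverseSignedTotalDominating f) (hG : G.IsRegularOfDegree d)
    (hd : d ≠ 0) : ∑ v, f v ≤ 0 := by
  rw [← nsmul_nonpos_iff hd, ← hG.sum_sum_neighborFinset]
  exact Finset.sum_nonpos fun v _ => hf.2 v

theorem sum_neighborFinset_eq_zero (hf : G.IsInverseSignedTotalDominating f)
    (hG : G.IsRegularOfDegree d) (h0 : ∑ v, f v = 0) (v : V) :
    ∑ u ∈ G.neighborFinset v, f u = 0 := by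
  have hsum := hG.sum_sum_neighborFinset f
  rw [h0, smul_zero, sum_eq_zero_iff_of_nonpos fun v _ => hf.2 v] at hsum
  exact hsum v (mem_univ v)

end IsInverseSignedTotalDominating

theorem cycleGraph_isRegularOfDegree_two (n : ℕ) : (cycleGraph (n + 3)).IsRegularOfDegree 2 :=
  fun _ => cycleGraph_degree_three_le

theorem sum_neighborFinset_cycleGraph {M : Type*} [AddCommMonoid M] {n : ℕ}
    (f : Fin (n + 3) → M) (v : Fin (n + 3)) :
    ∑ u ∈ (cycleGraph (n + 3)).neighborFinset v, f u = f (v - 1) + f (v + 1) := by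
  have hne : v - 1 ≠ v + 1 := by
    intro h
    have := (cycleGraph_isRegularOfDegree_two n).degree_eq v
    rw [cycleGraph_degree_two_le, h, pair_eq_singleton, card_singleton] at this
    omega
  rw [cycleGraph_neighborFinset, sum_pair hne]

namespace IsInverseSignedTotalDominating

variable {n : ℕ} {f : Fin (n + 3) → ℤ}

theorem antiperiodic_of_sum_eq_zero (hf : (cycleGraph (n + 3)).IsInverseSignedTotalDominating f)
    (h0 : ∑ v, f v = 0) : Function.Antiperiodic f 2 := by
  intro x
  have := hf.sum_neighborFinset_eq_zero (cycleGraph_isRegularOfDegree_two n) h0 (x + 1)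
  rw [sum_neighborFinset_cycleGraph, add_sub_cancel_right, show x + 1 + 1 = x + 2 by abel] at this
  omega

theorem sum_le_cycleGraph (hf : (cycleGraph (n + 3)).IsInverseSignedTotalDominating f) :
    ∑ v, f v ≤ if (n + 3) % 4 = 0 then 0 else if (n + 3) % 2 = 1 then -1 else -2 := by
  have hle := hf.sum_nonpos (cycleGraph_isRegularOfDegree_two n) two_ne_zero
  have hpar := Int.sum_modEq_card_of_forall_eq_one_or_eq_neg_one hf.1
  rw [Fintype.card_fin, Int.ModEq] at hpar
  have hne : (n + 3) % 4 = 2 → ∑ v, f v ≠ 0 := fun h4 h0 => by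
    have := (hf.antiperiodic_of_sum_eq_zero h0).eq_zero_of_mod_four_eq_two h4 0
    rcases hf.1 0 with h | h <;> omega
  split_ifs <;> omega

end IsInverseSignedTotalDominating

/-- The pattern `+ + - - + + - - ⋯`, except that the last two vertices are `-`, so that no two `+`
are at distance two across the wrap-around. -/
def cyclePattern (n : ℕ) (v : Fin n) : ℤ := if v.val % 4 < 2 ∧ v.val + 2 < n then 1 else -1

theorem sum_cyclePattern (n : ℕ) :
    ∑ v, cyclePattern (n + 3) v =
      if (n + 3) % 4 = 0 then 0 else if (n + 3) % 2 = 1 then -1 else -2 := by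
  unfold cyclePattern
  rw [Fin.sum_univ_eq_sum_range (fun i => if i % 4 < 2 ∧ i + 2 < n + 3 then (1 : ℤ) else -1),
    show n + 3 = n + 1 + 1 + 1 from rfl, sum_range_succ, sum_range_succ]
  have hhead :
      ∑ i ∈ range (n + 1), (if i % 4 < 2 ∧ i + 2 < n + 1 + 1 + 1 then (1 : ℤ) else -1) =
        ∑ i ∈ range (n + 1), (if i % 4 < 2 then 1 else -1) :=
    sum_congr rfl fun i hi => by
      have := mem_range.1 hi
      simp only [show i + 2 < n + 1 + 1 + 1 by omega, and_true]
  rw [hhead, sum_range_ite_mod_four_lt_two]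
  split_ifs <;> omega

theorem cyclePattern_add_two (n : ℕ) (j : Fin (n + 3)) (hj : cyclePattern (n + 3) j = 1) :
    cyclePattern (n + 3) (j + 2) = -1 := by
  unfold cyclePattern at *
  have hj' : j.val % 4 < 2 ∧ j.val + 2 < n + 3 := by
    by_contra h
    rw [if_neg h] at hj
    omega
  have hval : (j + 2).val = j.val + 2 := by simp [Fin.val_add, Nat.mod_eq_of_lt hj'.2]
  rw [if_neg (by omega)]

theorem isInverseSignedTotalDominating_cyclePattern (n : ℕ) :
    (cycleGraph (n + 3)).IsInverseSignedTotalDominating (cyclePattern (n + 3)) := by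
  have hsign : ∀ v, cyclePattern (n + 3) v = 1 ∨ cyclePattern (n + 3) v = -1 := fun v => by
    unfold cyclePattern
    split_ifs <;> simp
  refine ⟨hsign, fun v => ?_⟩
  have hstep : v - 1 + 2 = v + 1 := by
    rw [show (2 : Fin (n + 3)) = 1 + 1 by abel, sub_add_add_cancel]
  have := hstep ▸ cyclePattern_add_two n (v - 1)
  rw [sum_neighborFinset_cycleGraph]
  rcases hsign (v - 1) with h | h <;> rcases hsign (v + 1) with h' | h' <;> omega

end SimpleGraph

/-- The inverse signed total domination number of the cycle `C_n` (`n ≥ 3`) equals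
`0` if `n ≡ 0 (mod 4)`, `-1` if `n` is odd, and `-2` if `n ≡ 2 (mod 4)`. -/
theorem istdn_cycleGraph (n : ℕ) (hn : 3 ≤ n) :
    IsGreatest {w : ℤ | ∃ f : Fin n → ℤ,
        (∀ v, f v = 1 ∨ f v = -1) ∧
        (∀ v : Fin n, ∑ u ∈ (SimpleGraph.cycleGraph n).neighborFinset v, f u ≤ 0) ∧
        w = ∑ v, f v}
      (if n % 4 = 0 then 0 else if n % 2 = 1 then -1 else -2) := by
  obtain ⟨m, rfl⟩ : ∃ m, n = m + 3 := ⟨n - 3, by omega⟩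
  have hpattern := isInverseSignedTotalDominating_cyclePattern m
  refine ⟨⟨cyclePattern (m + 3), hpattern.1, hpattern.2, (sum_cyclePattern m).symm⟩, ?_⟩
  rintro w ⟨f, hsign, hnonpos, rfl⟩
  exact IsInverseSignedTotalDominating.sum_le_cycleGraph ⟨hsign, hnonpos⟩
end

section
/- For any graph G with minimum degree δ ≥ 1 and integer k with 2 ≤ k ≤ δ, the k-tuple total domination number satisfies γ_{×k,t}(G) ≥ γ_{×(k-1),t}(G) + 1. -/
open SimpleGraph Finset

/-- For a graph `G` with minimum degree `δ ≥ 1` and `2 ≤ k ≤ δ`,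
`γ_{×k,t}(G) ≥ γ_{×(k-1),t}(G) + 1`. -/
theorem kTupleTotalDomination_succ {V : Type*} [Fintype V] [DecidableEq V]
    (G : SimpleGraph V) [DecidableRel G.Adj] (k : ℕ)
    (hk2 : 2 ≤ k) (hkδ : k ≤ G.minDegree)
    (a b : ℕ)
    (ha : IsLeast {m : ℕ | ∃ D : Finset V,
        (∀ v : V, k ≤ (G.neighborFinset v ∩ D).card) ∧ D.card = m} a)
    (hb : IsLeast {m : ℕ | ∃ D : Finset V,
        (∀ v : V, k - 1 ≤ (G.neighborFinset v ∩ D).card) ∧ D.card = m} b) :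
    b + 1 ≤ a := by
  -- V is nonempty, since minDegree ≥ 2 > 0
  haveI : Nonempty V := by
    by_contra h
    rw [not_nonempty_iff] at h
    have : G.minDegree = 0 := by
      unfold SimpleGraph.minDegree
      simp [Finset.univ_eq_empty]
    omega
  obtain ⟨v⟩ := ‹Nonempty V›
  obtain ⟨D, hD, hDcard⟩ := ha.1
  -- pick a vertex w ∈ D
  have hv := hD v
  have hne : (G.neighborFinset v ∩ D).Nonempty := by
    rw [← Finset.card_pos]; omega
  obtain ⟨w, hw⟩ := hne
  have hwD : w ∈ D := (Finset.mem_inter.mp hw).2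
  -- D.erase w is a (k-1)-tuple total dominating set
  have hb' : b ≤ (D.erase w).card := by
    apply hb.2
    refine ⟨D.erase w, fun u => ?_, rfl⟩
    have h1 : (G.neighborFinset u ∩ D.erase w) = (G.neighborFinset u ∩ D).erase w := by
      ext x; simp [Finset.mem_erase, Finset.mem_inter]; tauto
    rw [h1]
    have h2 := Finset.pred_card_le_card_erase (s := G.neighborFinset u ∩ D) (a := w)
    have h3 := hD u
    omega
  have hcard : (D.erase w).card = D.card - 1 := Finset.card_erase_of_mem hwD
  have haD : k ≤ D.card := le_trans hv (Finset.card_le_card (Finset.inter_subset_right))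
  omega
end

section
/- For any graph G with minimum degree δ ≥ 1 and 1 ≤ k ≤ δ, the k-tuple total domination number satisfies γ_{×k,t}(G) ≥ γ_t(G) + k - 1, where γ_t is the total domination number. -/
/-!
Take a minimum `k`-tuple total dominating set `D` and delete any `k - 1` of its vertices (possible
because `D` contains the `k` neighbours of some vertex). Each vertex loses at most `k - 1` of its at
least `k` neighbours in `D`, so the remaining `a - (k - 1)` vertices still form a total dominating
set, whence `t ≤ a - (k - 1)`.
-/

open SimpleGraph Finset

namespace SimpleGraph

variable {V : Type*} [Fintype V] {G : SimpleGraph V} [DecidableRel G.Adj]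

theorem nonempty_of_pos_minDegree (h : 0 < G.minDegree) : Nonempty V := by
  by_contra hV
  have : IsEmpty V := not_nonempty_iff.mp hV
  exact h.ne' G.minDegree_of_subsingleton

variable [DecidableEq V]

variable (G) in
def IsKTupleTotalDominating (k : ℕ) (D : Finset V) : Prop :=
  ∀ v, k ≤ #(G.neighborFinset v ∩ D)

variable (G) in
def IsTotalDominating (D : Finset V) : Prop :=
  ∀ v, ∃ u ∈ D, G.Adj v u

variable {k : ℕ} {D : Finset V}

theorem IsKTupleTotalDominating.le_card [Nonempty V] (hD : G.IsKTupleTotalDominating k D) :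
    k ≤ #D :=
  (hD (Classical.arbitrary V)).trans (card_le_card inter_subset_right)

theorem IsKTupleTotalDominating.sdiff (hD : G.IsKTupleTotalDominating k D) (S : Finset V) :
    G.IsKTupleTotalDominating (k - #S) (D \ S) := fun v =>
  calc k - #S ≤ #(G.neighborFinset v ∩ D) - #S := Nat.sub_le_sub_right (hD v) _
    _ ≤ #((G.neighborFinset v ∩ D) \ S) := le_card_sdiff _ _
    _ = #(G.neighborFinset v ∩ (D \ S)) := by rw [inter_sdiff_assoc]

theorem IsKTupleTotalDominating.isTotalDominating (hD : G.IsKTupleTotalDominating k D)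
    (hk : 0 < k) : G.IsTotalDominating D := fun v => by
  obtain ⟨u, hu⟩ := card_pos.mp (hk.trans_le (hD v))
  rw [mem_inter, mem_neighborFinset] at hu
  exact ⟨u, hu.2, hu.1⟩

end SimpleGraph

/-- For a graph `G` with minimum degree `δ ≥ 1` and `1 ≤ k ≤ δ`,
`γ_{×k,t}(G) ≥ γ_t(G) + k - 1`. -/
theorem kTupleTotalDomination_ge_totalDomination {V : Type*} [Fintype V] [DecidableEq V]
    (G : SimpleGraph V) [DecidableRel G.Adj] (k : ℕ)
    (hk1 : 1 ≤ k) (hkδ : k ≤ G.minDegree)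
    (a t : ℕ)
    (ha : IsLeast {m : ℕ | ∃ D : Finset V,
        (∀ v : V, k ≤ (G.neighborFinset v ∩ D).card) ∧ D.card = m} a)
    (ht : IsLeast {m : ℕ | ∃ D : Finset V,
        (∀ v : V, ∃ u ∈ D, G.Adj v u) ∧ D.card = m} t) :
    t + k - 1 ≤ a := by
  obtain ⟨⟨D, hD, rfl⟩, -⟩ := ha
  change G.IsKTupleTotalDominating k D at hD
  have : Nonempty V := nonempty_of_pos_minDegree (hk1.trans hkδ)
  have hkD : k ≤ #D := hD.le_card
  obtain ⟨S, hSD, hS⟩ := exists_subset_card_eq (s := D) (n := k - 1) (by omega)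
  have hrest : G.IsTotalDominating (D \ S) := (hD.sdiff S).isTotalDominating (by omega)
  have htle := ht.2 ⟨D \ S, hrest, rfl⟩
  rw [card_sdiff_of_subset hSD, hS] at htle
  omega
end

section
/- If G is a graph of order n with minimum degree δ ≥ 1, then γ⁰_st(G) ≤ n - 2⌈(2γ_t(G) + δ - 2)/2⌉, where γ_t(G) is the total domination number. -/
open SimpleGraph Finset

private lemma sum_pm {V : Type*} [DecidableEq V] (s : Finset V) (f : V → ℤ)
    (h : ∀ v ∈ s, f v = 1 ∨ f v = -1) :
    ∑ v ∈ s, f v = (s.card : ℤ) - 2 * ((s.filter (fun v => f v = -1)).card : ℤ) := by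
  classical
  have h1 : ∑ v ∈ s.filter (fun v => f v = -1), f v
      = -((s.filter (fun v => f v = -1)).card : ℤ) := by
    calc ∑ v ∈ s.filter (fun v => f v = -1), f v
        = ∑ _v ∈ s.filter (fun v => f v = -1), (-1 : ℤ) :=
          Finset.sum_congr rfl fun v hv => (Finset.mem_filter.mp hv).2
      _ = _ := by simp
  have h2 : ∑ v ∈ s.filter (fun v => ¬ f v = -1), f v
      = ((s.filter (fun v => ¬ f v = -1)).card : ℤ) := by
    calc ∑ v ∈ s.filter (fun v => ¬ f v = -1), f v
        = ∑ _v ∈ s.filter (fun v => ¬ f v = -1), (1 : ℤ) :=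
          Finset.sum_congr rfl fun v hv =>
            (h v (Finset.mem_filter.mp hv).1).resolve_right (Finset.mem_filter.mp hv).2
      _ = _ := by simp
  have hc := Finset.card_filter_add_card_filter_not (s := s)
    (p := fun v => f v = -1)
  rw [← Finset.sum_filter_add_sum_filter_not s (fun v => f v = -1) f, h1, h2]
  omega

/-- If `G` is a graph of order `n` and minimum degree `δ ≥ 1`, then
`γ⁰_st(G) ≤ n - 2⌈(2γ_t(G) + δ - 2)/2⌉`. -/
theorem istdn_le_of_totalDomination {V : Type*} [Fintype V] [DecidableEq V]
    (G : SimpleGraph V) [DecidableRel G.Adj] (hδ : 1 ≤ G.minDegree)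
    (g : ℤ) (t : ℕ)
    (hg : IsGreatest {w : ℤ | ∃ f : V → ℤ,
        (∀ v, f v = 1 ∨ f v = -1) ∧
        (∀ v : V, ∑ u ∈ G.neighborFinset v, f u ≤ 0) ∧
        w = ∑ v, f v} g)
    (ht : IsLeast {m : ℕ | ∃ D : Finset V,
        (∀ v : V, ∃ u ∈ D, G.Adj v u) ∧ D.card = m} t) :
    g ≤ (Fintype.card V : ℤ) -
      2 * ⌈(2 * (t : ℚ) + (G.minDegree : ℚ) - 2) / 2⌉ := by
  classical
  obtain ⟨f, hf1, hf2, hgf⟩ := hg.1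
  have hne : Nonempty V := by
    by_contra h
    rw [not_nonempty_iff] at h
    have : G.minDegree = 0 := by
      simp [SimpleGraph.minDegree, Finset.univ_eq_empty]
    omega
  obtain ⟨k, hk⟩ : ∃ k : ℕ, k = (G.minDegree + 1) / 2 := ⟨_, rfl⟩
  set M : Finset V := univ.filter (fun v => f v = -1) with hM
  -- total weight formula
  have hsum : ∑ v, f v = (Fintype.card V : ℤ) - 2 * M.card := by
    have := sum_pm univ f (fun v _ => hf1 v)
    rw [← hM] at this
    simpa using this
  -- per-vertex count of negative neighbors
  have hcnt : ∀ v : V, k ≤ ((G.neighborFinset v).filter (fun u => f u = -1)).card := by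
    intro v
    have hs := sum_pm (G.neighborFinset v) f (fun u _ => hf1 u)
    rw [SimpleGraph.card_neighborFinset_eq_degree] at hs
    have hdeg : G.minDegree ≤ G.degree v := G.minDegree_le_degree v
    have hle := hf2 v
    rw [hs] at hle
    have h2c : (G.degree v : ℤ)
        ≤ 2 * (((G.neighborFinset v).filter (fun u => f u = -1)).card : ℤ) := by
      linarith
    have h2c' : G.degree v
        ≤ 2 * ((G.neighborFinset v).filter (fun u => f u = -1)).card := by
      exact_mod_cast h2c
    omega
  have hcM : ∀ v : V, ((G.neighborFinset v).filter (fun u => f u = -1)).card ≤ M.card := by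
    intro v
    apply Finset.card_le_card
    intro u hu
    simp only [hM, Finset.mem_filter, Finset.mem_univ, true_and]
    exact (Finset.mem_filter.mp hu).2
  have hk1 : 1 ≤ k := by omega
  obtain ⟨v₀⟩ := hne
  have hMk : k ≤ M.card := le_trans (hcnt v₀) (hcM v₀)
  obtain ⟨S, hSsub, hScard⟩ := Finset.exists_subset_card_eq (s := M) (n := k - 1) (by omega)
  -- D = M \ S is a total dominating set
  have hD : ∀ v : V, ∃ u ∈ M \ S, G.Adj v u := by
    intro v
    by_contra h
    push_neg at h
    have hsub : (G.neighborFinset v).filter (fun u => f u = -1) ⊆ S := by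
      intro u hu
      rcases Finset.mem_filter.mp hu with ⟨hunb, huf⟩
      rw [SimpleGraph.mem_neighborFinset] at hunb
      have huM : u ∈ M := by
        simp only [hM, Finset.mem_filter, Finset.mem_univ, true_and]; exact huf
      by_contra huS
      exact h u (Finset.mem_sdiff.mpr ⟨huM, huS⟩) hunb
    have h1 := Finset.card_le_card hsub
    have h2 := hcnt v
    omega
  have htD : t ≤ (M \ S).card := ht.2 ⟨M \ S, hD, rfl⟩
  have hDcard : (M \ S).card = M.card - S.card := Finset.card_sdiff_of_subset hSsub
  have hMbig : t + k - 1 ≤ M.card := by omega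
  -- ceiling bound
  have hceil : ⌈(2 * (t : ℚ) + (G.minDegree : ℚ) - 2) / 2⌉ ≤ (t : ℤ) + (k : ℤ) - 1 := by
    rw [Int.ceil_le]
    push_cast
    rw [div_le_iff₀ (by norm_num : (0:ℚ) < 2)]
    have h2k : (G.minDegree : ℚ) ≤ 2 * (k : ℚ) := by
      have : G.minDegree ≤ 2 * k := by omega
      exact_mod_cast this
    linarith
  have hMZ : (t : ℤ) + (k : ℤ) - 1 ≤ (M.card : ℤ) := by
    have := hMbig
    omega
  rw [hgf, hsum]
  linarith
end

section
/- The inverse signed total domination number of the complete bipartite graph K_{m,n} with m, n ≥ 1 equals 0 if m and n are both even, -1 if m and n have different parity, and -2 if m and n are both odd. -/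
open SimpleGraph Finset

instance (m n : ℕ) : DecidableRel (completeBipartiteGraph (Fin m) (Fin n)).Adj :=
  fun a b => by simp only [completeBipartiteGraph]; infer_instance

lemma nbhd_inl (m n : ℕ) (a : Fin m) :
    (completeBipartiteGraph (Fin m) (Fin n)).neighborFinset (Sum.inl a)
      = univ.map ⟨Sum.inr, Sum.inr_injective⟩ := by
  ext u; cases u <;> simp [mem_neighborFinset]

lemma nbhd_inr (m n : ℕ) (b : Fin n) :
    (completeBipartiteGraph (Fin m) (Fin n)).neighborFinset (Sum.inr b)
      = univ.map ⟨Sum.inl, Sum.inl_injective⟩ := by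
  ext u; cases u <;> simp [mem_neighborFinset]

lemma par_sum (k : ℕ) (g : Fin k → ℤ) (h : ∀ i, g i = 1 ∨ g i = -1) :
    (∑ i, g i) % 2 = (k : ℤ) % 2 := by
  rw [Finset.sum_int_mod]
  have : ∀ i, g i % 2 = 1 := fun i => by rcases h i with h | h <;> simp [h]
  simp [this]

lemma wsum (k : ℕ) :
    ∑ i : Fin k, (if (i : ℕ) < k / 2 then (1 : ℤ) else -1) = 2 * (k / 2 : ℕ) - k := by
  rw [Fin.sum_univ_eq_sum_range (fun x => if x < k / 2 then (1 : ℤ) else -1)]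
  rw [Finset.range_eq_Ico, ← Finset.sum_Ico_consecutive _ (Nat.zero_le (k / 2)) (Nat.div_le_self k 2)]
  rw [Finset.sum_congr rfl (fun x hx => if_pos (Finset.mem_Ico.1 hx).2),
      Finset.sum_congr rfl (fun x hx => if_neg (by have := (Finset.mem_Ico.1 hx).1; omega))]
  simp [Nat.card_Ico]
  have := Nat.div_le_self k 2
  ring_nf
  omega

/-- The inverse signed total domination number of the complete bipartite graph
`K_{m,n}` equals `0` if `m, n` are both even, `-1` if `m` and `n` have different
parity, and `-2` if `m, n` are both odd. -/
theorem istdn_completeBipartiteGraph (m n : ℕ) (hm : 1 ≤ m) (hn : 1 ≤ n) :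
    IsGreatest {w : ℤ | ∃ f : Fin m ⊕ Fin n → ℤ,
        (∀ v, f v = 1 ∨ f v = -1) ∧
        (∀ v : Fin m ⊕ Fin n,
          ∑ u ∈ (completeBipartiteGraph (Fin m) (Fin n)).neighborFinset v, f u ≤ 0) ∧
        w = ∑ v, f v}
      (if m % 2 = n % 2 then (if m % 2 = 0 then 0 else -2) else -1) := by
  constructor
  · refine ⟨Sum.elim (fun i => if (i : ℕ) < m / 2 then (1 : ℤ) else -1)
      (fun j => if (j : ℕ) < n / 2 then (1 : ℤ) else -1), ?_, ?_, ?_⟩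
    · rintro (a | b) <;> dsimp <;> split_ifs <;> simp
    · rintro (a | b)
      · rw [nbhd_inl, Finset.sum_map]
        simp only [Function.Embedding.coeFn_mk, Sum.elim_inr]
        rw [wsum]
        have := Nat.div_le_self n 2; omega
      · rw [nbhd_inr, Finset.sum_map]
        simp only [Function.Embedding.coeFn_mk, Sum.elim_inl]
        rw [wsum]
        have := Nat.div_le_self m 2; omega
    · rw [Fintype.sum_sum_type]
      simp only [Sum.elim_inl, Sum.elim_inr]
      rw [wsum, wsum]
      split_ifs <;> omega
  · rintro w ⟨f, hpm, hc, hw⟩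
    have hA : (∑ i : Fin m, f (Sum.inl i)) ≤ 0 := by
      have := hc (Sum.inr ⟨0, hn⟩)
      rwa [nbhd_inr, Finset.sum_map] at this
    have hB : (∑ j : Fin n, f (Sum.inr j)) ≤ 0 := by
      have := hc (Sum.inl ⟨0, hm⟩)
      rwa [nbhd_inl, Finset.sum_map] at this
    have hpA : (∑ i : Fin m, f (Sum.inl i)) % 2 = (m : ℤ) % 2 :=
      par_sum m _ (fun i => hpm (Sum.inl i))
    have hpB : (∑ j : Fin n, f (Sum.inr j)) % 2 = (n : ℤ) % 2 :=
      par_sum n _ (fun j => hpm (Sum.inr j))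
    rw [Fintype.sum_sum_type] at hw
    split_ifs <;> omega
end

section
/- Let r ≥ 2 and let G be a K_{r+1}-free graph of order n with minimum degree δ ≥ 1, and set c = ⌈δ/2⌉. Then γ⁰_st(G) ≤ n - (r/(r-1))·(-c + √(c² + 4·((r-1)/r)·c·n)). -/
open SimpleGraph Finset

lemma turan_aux {V : Type*} [Fintype V] [DecidableEq V]
    (G : SimpleGraph V) [DecidableRel G.Adj] :
    ∀ (r : ℕ) (M : Finset V), (∀ S : Finset V, ↑S ⊆ (M : Set V) → ¬ G.IsNClique (r+1) S) →
      r * ∑ u ∈ M, (G.neighborFinset u ∩ M).card ≤ (r-1) * M.card ^ 2 := by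
  intro r
  induction r with
  | zero => intro M h; simp
  | succ r ih =>
    intro M hM
    rcases Nat.eq_zero_or_pos r with hr0 | hrpos
    · -- no 2-cliques: all intersections empty
      subst hr0
      have : ∀ u ∈ M, (G.neighborFinset u ∩ M).card = 0 := by
        intro u hu
        rw [Finset.card_eq_zero, Finset.eq_empty_iff_forall_notMem]
        intro w hw
        simp only [Finset.mem_inter, mem_neighborFinset] at hw
        refine hM {u, w} ?_ ?_
        · intro x hx; simp only [Finset.coe_insert, Set.mem_insert_iff, Finset.coe_singleton,
            Set.mem_singleton_iff] at hx
          rcases hx with rfl | rfl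
          · exact hu
          · exact hw.2
        · exact (isNClique_singleton.2 rfl).insert (fun b hb => by
            simp only [Finset.mem_singleton] at hb; subst hb; exact hw.1)
      rw [Finset.sum_congr rfl this]
      simp
    · -- main step, r ≥ 1
      rcases M.eq_empty_or_nonempty with rfl | hne
      · simp
      obtain ⟨v, hvM, hvmax⟩ := M.exists_max_image (fun u => (G.neighborFinset u ∩ M).card) hne
      set A : Finset V := G.neighborFinset v ∩ M with hA
      have hAM : A ⊆ M := Finset.inter_subset_right
      set B : Finset V := M \ A with hB
      set d := A.card
      set b := B.card
      have hmdb : b + d = M.card := by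
        simpa using Finset.card_sdiff_add_card_eq_card hAM
      -- IH applied to A
      have hIH : r * ∑ u ∈ A, (G.neighborFinset u ∩ A).card ≤ (r-1) * d ^ 2 := by
        apply ih
        intro S hS hclique
        refine hM (insert v S) ?_ (hclique.insert ?_)
        · intro x hx
          simp only [Finset.coe_insert, Set.mem_insert_iff] at hx
          rcases hx with rfl | hx
          · exact hvM
          · exact hAM (hS hx)
        · intro u hu
          have := hS hu
          simp only [hA, Finset.coe_inter, Set.mem_inter_iff, Finset.mem_coe,
            mem_neighborFinset] at this
          exact this.1
      -- double counting between A and B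
      have hdc : ∑ u ∈ A, (G.neighborFinset u ∩ B).card
          = ∑ u ∈ B, (G.neighborFinset u ∩ A).card := by
        have key : ∀ (P Q : Finset V), ∑ u ∈ P, (G.neighborFinset u ∩ Q).card
            = ∑ u ∈ P, ∑ w ∈ Q, (if G.Adj u w then 1 else 0) := by
          intro P Q
          refine Finset.sum_congr rfl fun u _ => ?_
          have : G.neighborFinset u ∩ Q = Q.filter (G.Adj u) := by
            ext w; simp [mem_neighborFinset, and_comm]
          rw [this, Finset.card_filter]
        rw [key, key, Finset.sum_comm]
        refine Finset.sum_congr rfl fun u _ => Finset.sum_congr rfl fun w _ => ?_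
        exact if_congr (G.adj_comm w u) rfl rfl
      -- bounds
      have hbound1 : ∀ u ∈ M, (G.neighborFinset u ∩ M).card ≤ d := fun u hu => hvmax u hu
      have hBM : B ⊆ M := Finset.sdiff_subset
      have hbound2 : ∀ u ∈ B, (G.neighborFinset u ∩ A).card ≤ d := by
        intro u hu
        have hsub : G.neighborFinset u ∩ A ⊆ G.neighborFinset u ∩ M := by
          intro x hx
          rw [Finset.mem_inter] at hx ⊢
          exact ⟨hx.1, hAM hx.2⟩
        exact le_trans (Finset.card_le_card hsub) (hbound1 u (hBM hu))
      have hsplit : ∑ u ∈ M, (G.neighborFinset u ∩ M).card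
          ≤ ∑ u ∈ A, (G.neighborFinset u ∩ A).card + 2 * (b * d) := by
        have hMsum : ∑ u ∈ M, (G.neighborFinset u ∩ M).card
            = ∑ u ∈ B, (G.neighborFinset u ∩ M).card
              + ∑ u ∈ A, (G.neighborFinset u ∩ M).card := by
          rw [hB, Finset.sum_sdiff hAM]
        have h1 : ∑ u ∈ B, (G.neighborFinset u ∩ M).card ≤ b * d := by
          calc ∑ u ∈ B, (G.neighborFinset u ∩ M).card ≤ ∑ _u ∈ B, d :=
                Finset.sum_le_sum (fun u hu => hbound1 u (Finset.sdiff_subset hu))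
            _ = b * d := by rw [Finset.sum_const, smul_eq_mul]
        have h2 : ∀ u ∈ A, (G.neighborFinset u ∩ M).card
            ≤ (G.neighborFinset u ∩ A).card + (G.neighborFinset u ∩ B).card := by
          intro u _
          have : G.neighborFinset u ∩ M = (G.neighborFinset u ∩ A) ∪ (G.neighborFinset u ∩ B) := by
            rw [← Finset.inter_union_distrib_left, hB, Finset.union_sdiff_of_subset hAM]
          rw [this]
          exact Finset.card_union_le _ _
        have h3 : ∑ u ∈ A, (G.neighborFinset u ∩ M).card
            ≤ ∑ u ∈ A, (G.neighborFinset u ∩ A).card + b * d := by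
          calc ∑ u ∈ A, (G.neighborFinset u ∩ M).card
              ≤ ∑ u ∈ A, ((G.neighborFinset u ∩ A).card + (G.neighborFinset u ∩ B).card) :=
                Finset.sum_le_sum h2
            _ = ∑ u ∈ A, (G.neighborFinset u ∩ A).card + ∑ u ∈ A, (G.neighborFinset u ∩ B).card :=
                Finset.sum_add_distrib
            _ ≤ ∑ u ∈ A, (G.neighborFinset u ∩ A).card + b * d := by
                rw [hdc]
                gcongr
                calc ∑ u ∈ B, (G.neighborFinset u ∩ A).card ≤ ∑ _u ∈ B, d :=
                      Finset.sum_le_sum hbound2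
                  _ = b * d := by rw [Finset.sum_const, smul_eq_mul]
        omega
      -- final arithmetic in ℤ
      have hrz : (1 : ℤ) ≤ (r : ℤ) := by exact_mod_cast hrpos
      set Ssum := ∑ u ∈ M, (G.neighborFinset u ∩ M).card
      set SA := ∑ u ∈ A, (G.neighborFinset u ∩ A).card
      have hcast : ((r - 1 : ℕ) : ℤ) = (r : ℤ) - 1 := by
        have : 1 ≤ r := hrpos
        omega
      zify [hcast] at hIH hsplit ⊢
      have hm : (M.card : ℤ) = (b : ℤ) + d := by exact_mod_cast hmdb.symm
      rw [hm]
      have key : (r : ℤ) * (((r : ℤ) + 1) * Ssum) ≤ (r : ℤ) * ((r : ℤ) * ((b : ℤ) + d)^2) := by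
        nlinarith [sq_nonneg ((r : ℤ) * b - d), hIH, hsplit, hrz,
          mul_le_mul_of_nonneg_left hsplit (by linarith : (0:ℤ) ≤ (r:ℤ))]
      have := le_of_mul_le_mul_left key (by linarith : (0:ℤ) < (r:ℤ))
      push_cast
      linarith

lemma double_count {V : Type*} [Fintype V] [DecidableEq V]
    (G : SimpleGraph V) [DecidableRel G.Adj] (P Q : Finset V) :
    ∑ u ∈ P, (G.neighborFinset u ∩ Q).card = ∑ u ∈ Q, (G.neighborFinset u ∩ P).card := by
  have key : ∀ (P Q : Finset V), ∑ u ∈ P, (G.neighborFinset u ∩ Q).card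
      = ∑ u ∈ P, ∑ w ∈ Q, (if G.Adj u w then 1 else 0) := by
    intro P Q
    refine Finset.sum_congr rfl fun u _ => ?_
    have : G.neighborFinset u ∩ Q = Q.filter (G.Adj u) := by
      ext w; simp [mem_neighborFinset, and_comm]
    rw [this, Finset.card_filter]
  rw [key, key, Finset.sum_comm]
  refine Finset.sum_congr rfl fun u _ => Finset.sum_congr rfl fun w _ => ?_
  exact if_congr (G.adj_comm w u) rfl rfl

/-- For `r ≥ 2` and a `K_{r+1}`-free graph `G` of order `n` with minimum degree
`δ ≥ 1` and `c = ⌈δ/2⌉`, we have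
`γ⁰_st(G) ≤ n - (r/(r-1))·(-c + √(c² + 4·((r-1)/r)·c·n))`. -/
theorem istdn_le_of_cliqueFree {V : Type*} [Fintype V] [DecidableEq V]
    (G : SimpleGraph V) [DecidableRel G.Adj] (r : ℕ) (hr : 2 ≤ r)
    (hfree : G.CliqueFree (r + 1)) (hδ : 1 ≤ G.minDegree)
    (g : ℤ)
    (hg : IsGreatest {w : ℤ | ∃ f : V → ℤ,
        (∀ v, f v = 1 ∨ f v = -1) ∧
        (∀ v : V, ∑ u ∈ G.neighborFinset v, f u ≤ 0) ∧
        w = ∑ v, f v} g) :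
    (g : ℝ) ≤ (Fintype.card V : ℝ) - ((r : ℝ) / (r - 1)) *
      (-(((G.minDegree + 1) / 2 : ℕ) : ℝ) +
        Real.sqrt ((((G.minDegree + 1) / 2 : ℕ) : ℝ) ^ 2 +
          4 * (((r : ℝ) - 1) / r) * (((G.minDegree + 1) / 2 : ℕ) : ℝ) *
            (Fintype.card V : ℝ))) := by
  classical
  obtain ⟨f, hf1, hf2, hfw⟩ := hg.1
  set c : ℕ := (G.minDegree + 1) / 2 with hc
  set P : Finset V := univ.filter (fun v => f v = 1) with hP
  set M : Finset V := univ.filter (fun v => f v = -1) with hM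
  -- basic membership facts
  have hmemP : ∀ v, v ∈ P ↔ f v = 1 := by intro v; simp [hP]
  have hmemM : ∀ v, v ∈ M ↔ f v = -1 := by intro v; simp [hM]
  have hunion : P ∪ M = univ := by
    ext v; simp only [Finset.mem_union, hmemP, hmemM, Finset.mem_univ, iff_true]
    exact hf1 v
  have hdisj : Disjoint P M := by
    rw [Finset.disjoint_left]
    intro v hvP hvM
    rw [hmemP] at hvP; rw [hmemM] at hvM
    omega
  have hPMcard : P.card + M.card = Fintype.card V := by
    rw [← Finset.card_union_of_disjoint hdisj, hunion, Finset.card_univ]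
  -- splitting neighborhoods
  have hNsplit : ∀ v : V, (G.neighborFinset v ∩ P).card + (G.neighborFinset v ∩ M).card
      = G.degree v := by
    intro v
    rw [← Finset.card_union_of_disjoint
      (Finset.disjoint_of_subset_left Finset.inter_subset_right
        (Finset.disjoint_of_subset_right Finset.inter_subset_right hdisj)),
      ← Finset.inter_union_distrib_left, hunion, Finset.inter_univ, card_neighborFinset_eq_degree]
  -- core: at every vertex, at least as many -1 neighbors as +1 neighbors
  have hcore : ∀ v : V, (G.neighborFinset v ∩ P).card ≤ (G.neighborFinset v ∩ M).card := by
    intro v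
    have hs := hf2 v
    have hsum : ∑ u ∈ G.neighborFinset v, f u
        = ((G.neighborFinset v ∩ P).card : ℤ) - (G.neighborFinset v ∩ M).card := by
      rw [← Finset.sum_filter_add_sum_filter_not (G.neighborFinset v) (fun u => f u = 1)]
      have e1 : (G.neighborFinset v).filter (fun u => f u = 1) = G.neighborFinset v ∩ P := by
        ext u; simp [hmemP, Finset.mem_filter]
      have e2 : (G.neighborFinset v).filter (fun u => ¬ f u = 1) = G.neighborFinset v ∩ M := by
        ext u
        simp only [Finset.mem_filter, Finset.mem_inter, hmemM]
        constructor
        · rintro ⟨h1, h2⟩; exact ⟨h1, (hf1 u).resolve_left h2⟩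
        · rintro ⟨h1, h2⟩; exact ⟨h1, by omega⟩
      rw [Finset.sum_congr e1 (fun u hu => (hmemP u).1 (Finset.mem_inter.1 hu).2),
        Finset.sum_congr e2 (fun u hu => (hmemM u).1 (Finset.mem_inter.1 hu).2)]
      simp only [Finset.sum_const, smul_eq_mul, mul_one, mul_neg_one]
      ring
    rw [hsum] at hs
    omega
  -- Step A : every vertex has at least c neighbours in M
  have hA : ∀ v : V, c ≤ (G.neighborFinset v ∩ M).card := by
    intro v
    have h1 := hcore v
    have h2 := hNsplit v
    have h3 : G.minDegree ≤ G.degree v := G.minDegree_le_degree v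
    omega
  -- Step B
  have hB : c * P.card ≤ ∑ v ∈ P, (G.neighborFinset v ∩ M).card := by
    calc c * P.card = ∑ _v ∈ P, c := by rw [Finset.sum_const, smul_eq_mul, mul_comm]
      _ ≤ ∑ v ∈ P, (G.neighborFinset v ∩ M).card := Finset.sum_le_sum fun v _ => hA v
  have hC : ∑ v ∈ P, (G.neighborFinset v ∩ M).card
      = ∑ u ∈ M, (G.neighborFinset u ∩ P).card := double_count G P M
  have hD : ∑ u ∈ M, (G.neighborFinset u ∩ P).card
      ≤ ∑ u ∈ M, (G.neighborFinset u ∩ M).card := Finset.sum_le_sum fun u _ => hcore u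
  have hE : r * ∑ u ∈ M, (G.neighborFinset u ∩ M).card ≤ (r - 1) * M.card ^ 2 := by
    apply turan_aux
    intro S _ hclique
    exact hfree S hclique
  have hkey : r * (c * P.card) ≤ (r - 1) * M.card ^ 2 :=
    le_trans (Nat.mul_le_mul_left r (le_trans hB (le_trans (le_of_eq hC) hD))) hE
  -- g = P.card - M.card
  have hgval : (g : ℤ) = (P.card : ℤ) - M.card := by
    rw [hfw, ← Finset.sum_filter_add_sum_filter_not univ (fun v => f v = 1)]
    have e2 : univ.filter (fun v => ¬ f v = 1) = M := by
      ext u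
      simp only [Finset.mem_filter, Finset.mem_univ, true_and, hmemM]
      constructor
      · intro h2; exact (hf1 u).resolve_left h2
      · intro h2; omega
    rw [e2, Finset.sum_congr rfl (fun u hu => (hmemM u).1 hu)]
    have e1 : ∑ v ∈ univ.filter (fun v => f v = 1), f v = P.card := by
      rw [Finset.sum_congr hP.symm (fun u hu => (hmemP u).1 hu)]
      simp
    rw [e1]
    simp only [Finset.sum_const, smul_eq_mul, mul_neg_one]
    ring
  -- pass to the reals
  set R : ℝ := (r : ℝ) with hR
  have hR2 : (2 : ℝ) ≤ R := by rw [hR]; exact_mod_cast hr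
  have hR1 : (0 : ℝ) < R - 1 := by linarith
  have hR0 : (0 : ℝ) < R := by linarith
  set C : ℝ := (c : ℝ) with hCdef
  set p : ℝ := (P.card : ℝ)
  set m : ℝ := (M.card : ℝ)
  set n : ℝ := (Fintype.card V : ℝ)
  have hC0 : (0 : ℝ) ≤ C := Nat.cast_nonneg c
  have hm0 : (0 : ℝ) ≤ m := Nat.cast_nonneg _
  have hnpm : p + m = n := by
    show ((P.card : ℝ) + (M.card : ℝ) = (Fintype.card V : ℝ))
    exact_mod_cast hPMcard
  have hkeyR : R * (C * p) ≤ (R - 1) * m ^ 2 := by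
    have := hkey
    have hcast : ((r - 1 : ℕ) : ℝ) = R - 1 := by
      have : 1 ≤ r := by omega
      push_cast [Nat.cast_sub this]
      ring
    calc R * (C * p) = ((r * (c * P.card) : ℕ) : ℝ) := by push_cast; ring
      _ ≤ (((r - 1) * M.card ^ 2 : ℕ) : ℝ) := by exact_mod_cast hkey
      _ = (R - 1) * m ^ 2 := by push_cast [hcast]; ring
  set a : ℝ := (R - 1) / R with ha
  have ha0 : 0 < a := div_pos hR1 hR0
  have h1 : C * p ≤ a * m ^ 2 := by
    rw [ha, div_mul_eq_mul_div, le_div_iff₀ hR0]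
    nlinarith [hkeyR]
  have h1' : C * n ≤ C * m + a * m ^ 2 := by
    have hcn : C * n = C * p + C * m := by rw [← hnpm]; ring
    linarith
  have hsq : C ^ 2 + 4 * a * C * n ≤ (C + 2 * a * m) ^ 2 := by
    nlinarith [mul_nonneg ha0.le (sub_nonneg.2 h1')]
  have hsqrt : Real.sqrt (C ^ 2 + 4 * a * C * n) ≤ C + 2 * a * m := by
    have h2 : (0:ℝ) ≤ C + 2 * a * m := by positivity
    calc Real.sqrt (C ^ 2 + 4 * a * C * n) ≤ Real.sqrt ((C + 2 * a * m) ^ 2) :=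
          Real.sqrt_le_sqrt hsq
      _ = C + 2 * a * m := Real.sqrt_sq h2
  have hfin : (R / (R - 1)) * (-C + Real.sqrt (C ^ 2 + 4 * a * C * n)) ≤ 2 * m := by
    have h3 : -C + Real.sqrt (C ^ 2 + 4 * a * C * n) ≤ 2 * a * m := by linarith
    have h4 : (0:ℝ) ≤ R / (R - 1) := by positivity
    calc (R / (R - 1)) * (-C + Real.sqrt (C ^ 2 + 4 * a * C * n))
        ≤ (R / (R - 1)) * (2 * a * m) := mul_le_mul_of_nonneg_left h3 h4
      _ = 2 * m := by rw [ha]; field_simp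
  have hgR : (g : ℝ) = p - m := by rw [hgval]; push_cast; ring
  rw [hgR]
  linarith [hfin]
end

section
/- Let G be a K_{r+1}-free graph (r ≥ 2) and f an ISTDF of G, with M = {v : f(v) = -1} and P = {v : f(v) = 1}. Then the number of edges between M and P satisfies |[M,P]| ≤ 2|E(G[M])| ≤ ((r-1)/r)·|M|², where G[M] is the subgraph induced by M. -/
/-!
Each vertex of `M` has nonpositive neighbourhood sum, so it sees at most as many neighbours in
`P` as in `M`; summing over `M` gives the first inequality. The sum `∑_{v∈M} |N(v) ∩ M|` is the
degree sum of `G[M]`, i.e. twice its number of edges, and `G[M]` is `K_{r+1}`-free, so the bound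
`2r·e(H) ≤ (r-1)·|V(H)|²` for `K_{r+1}`-free `H`, read off from the Turán graph, gives the second.
-/

open SimpleGraph Finset

theorem Finset.card_filter_eq_one_le_card_filter_eq_neg_one {ι : Type*} {s : Finset ι}
    {f : ι → ℤ} (hf : ∀ i ∈ s, f i = 1 ∨ f i = -1) (hsum : ∑ i ∈ s, f i ≤ 0) :
    #{i ∈ s | f i = 1} ≤ #{i ∈ s | f i = -1} := by
  have hcount : ∑ i ∈ s, f i = #{i ∈ s | f i = 1} - #{i ∈ s | f i = -1} := by
    rw [card_filter, card_filter]
    push_cast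
    rw [← sum_sub_distrib]
    refine sum_congr rfl fun i hi => ?_
    rcases hf i hi with h | h <;> simp [h]
  omega

namespace SimpleGraph
variable {V : Type*} [Fintype V] {G : SimpleGraph V} [DecidableRel G.Adj]

theorem CliqueFree.two_mul_card_edgeFinset_le {r : ℕ} (cf : G.CliqueFree (r + 1)) :
    (2 * #G.edgeFinset : ℚ) ≤ (r - 1) / r * Fintype.card V ^ 2 := by
  rcases r.eq_zero_or_pos with rfl | hr
  · have hV : IsEmpty V := cliqueFree_one.mp cf
    have hE : G.edgeFinset = ∅ :=
      eq_empty_of_forall_notMem fun e _ => e.inductionOn fun a _ => isEmptyElim a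
    simp [hE]
  obtain ⟨H, _, maxH⟩ := exists_isTuranMaximal (V := V) hr
  have hH : 2 * r * #H.edgeFinset ≤ (r - 1) * Fintype.card V ^ 2 := by
    rw [((isTuranMaximal_iff_nonempty_iso_turanGraph hr).mp maxH).some.card_edgeFinset_eq]
    exact mul_card_edgeFinset_turanGraph_le
  have hG : r * (2 * #G.edgeFinset) ≤ (r - 1) * Fintype.card V ^ 2 := by
    rw [mul_left_comm, ← mul_assoc]
    exact (Nat.mul_le_mul_left _ (maxH.2 cf)).trans hH
  rw [div_mul_eq_mul_div, le_div_iff₀' (by exact_mod_cast hr), ← Nat.cast_pred hr]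
  exact_mod_cast hG

variable [DecidableEq V]

theorem degree_induce_eq_card_neighborFinset_inter (s : Finset V) (v : s) :
    (G.induce (s : Set V)).degree v = #(G.neighborFinset v ∩ s) := by
  rw [← card_neighborFinset_eq_degree, ← card_map (Function.Embedding.subtype _)]
  congr 1
  ext u
  simp

theorem sum_card_neighborFinset_inter_eq (s : Finset V) :
    ∑ v ∈ s, #(G.neighborFinset v ∩ s) = 2 * #(G.induce (s : Set V)).edgeFinset := by
  rw [← sum_degrees_eq_twice_card_edges, ← sum_coe_sort s]
  exact Fintype.sum_congr _ _ fun v => (degree_induce_eq_card_neighborFinset_inter s v).symm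

end SimpleGraph

/-- `|[M,P]|` is encoded as `∑_{v∈M} |N(v) ∩ P|` and `2|E(G[M])|` as `∑_{v∈M} |N(v) ∩ M|`. -/
theorem istdf_edges_between_bound_general {V : Type*} [Fintype V] [DecidableEq V]
    (G : SimpleGraph V) [DecidableRel G.Adj] (r : ℕ)
    (hfree : G.CliqueFree (r + 1))
    (f : V → ℤ) (hf1 : ∀ v, f v = 1 ∨ f v = -1)
    (hf2 : ∀ v, ∑ u ∈ G.neighborFinset v, f u ≤ 0)
    (M P : Finset V) (hM : M = Finset.univ.filter (fun v => f v = -1))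
    (hP : P = Finset.univ.filter (fun v => f v = 1)) :
    (∑ v ∈ M, (G.neighborFinset v ∩ P).card) ≤
        (∑ v ∈ M, (G.neighborFinset v ∩ M).card) ∧
      ((∑ v ∈ M, (G.neighborFinset v ∩ M).card : ℚ)) ≤
        (((r : ℚ) - 1) / r) * (M.card : ℚ) ^ 2 := by
  refine ⟨sum_le_sum fun v _ => ?_, ?_⟩
  · subst hM hP
    simpa only [inter_filter, inter_univ] using
      card_filter_eq_one_le_card_filter_eq_neg_one (fun u _ => hf1 u) (hf2 v)
  · have hturan :=
      (hfree.comap (Embedding.induce (M : Set V)).isContained).two_mul_card_edgeFinset_le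
    rw [← Nat.cast_sum, sum_card_neighborFinset_inter_eq]
    simpa using hturan

/-- Let `G` be `K_{r+1}`-free (`r ≥ 2`) and `f` an ISTDF of `G`, with
`M = {v : f v = -1}` and `P = {v : f v = 1}`. Then
`|[M,P]| ≤ 2|E(G[M])| ≤ ((r-1)/r)·|M|²`, where `|[M,P]| = ∑_{v∈M} |N(v) ∩ P|`
and `2|E(G[M])| = ∑_{v∈M} |N(v) ∩ M|`. -/
theorem istdf_edges_between_bound {V : Type*} [Fintype V] [DecidableEq V]
    (G : SimpleGraph V) [DecidableRel G.Adj] (r : ℕ) (hr : 2 ≤ r)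
    (hfree : G.CliqueFree (r + 1))
    (f : V → ℤ) (hf1 : ∀ v, f v = 1 ∨ f v = -1)
    (hf2 : ∀ v, ∑ u ∈ G.neighborFinset v, f u ≤ 0)
    (M P : Finset V) (hM : M = Finset.univ.filter (fun v => f v = -1))
    (hP : P = Finset.univ.filter (fun v => f v = 1)) :
    (∑ v ∈ M, (G.neighborFinset v ∩ P).card) ≤
        (∑ v ∈ M, (G.neighborFinset v ∩ M).card) ∧
      ((∑ v ∈ M, (G.neighborFinset v ∩ M).card : ℚ)) ≤
        (((r : ℚ) - 1) / r) * (M.card : ℚ) ^ 2 :=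
  istdf_edges_between_bound_general G r hfree f hf1 hf2 M P hM hP
end

section
/- If G is an r-regular graph of order n (r ≥ 1), then γ⁰_st(G) = n - 2·γ_{×⌈r/2⌉,t}(G), where γ_{×k,t} denotes the k-tuple total domination number. -/
open SimpleGraph Finset

lemma sum_pm_eq {V : Type*} [DecidableEq V] (f : V → ℤ)
    (hf : ∀ v, f v = 1 ∨ f v = -1) (D : Finset V)
    (hD : ∀ v, v ∈ D ↔ f v = -1) (S : Finset V) :
    ∑ u ∈ S, f u = S.card - 2 * (S ∩ D).card := by
  have h : ∀ u ∈ S, f u = 1 - 2 * (if u ∈ D then (1:ℤ) else 0) := by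
    intro u _
    rcases hf u with h | h <;> by_cases hu : u ∈ D <;>
      simp_all [hD] <;> omega
  rw [Finset.sum_congr rfl h, Finset.sum_sub_distrib, Finset.sum_const,
    ← Finset.mul_sum, Finset.sum_ite_mem, Finset.sum_const]
  simp [mul_comm]

/-- If `G` is `r`-regular of order `n` (`r ≥ 1`), then
`γ⁰_st(G) = n - 2·γ_{×⌈r/2⌉,t}(G)`. -/
theorem istdn_regular_eq {V : Type*} [Fintype V] [DecidableEq V]
    (G : SimpleGraph V) [DecidableRel G.Adj] (r : ℕ) (hr : 1 ≤ r)
    (hreg : G.IsRegularOfDegree r)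
    (g : ℤ) (d : ℕ)
    (hg : IsGreatest {w : ℤ | ∃ f : V → ℤ,
        (∀ v, f v = 1 ∨ f v = -1) ∧
        (∀ v : V, ∑ u ∈ G.neighborFinset v, f u ≤ 0) ∧
        w = ∑ v, f v} g)
    (hd : IsLeast {m : ℕ | ∃ D : Finset V,
        (∀ v : V, (r + 1) / 2 ≤ (G.neighborFinset v ∩ D).card) ∧ D.card = m} d) :
    g = (Fintype.card V : ℤ) - 2 * d := by
  have hcardN : ∀ v : V, (G.neighborFinset v).card = r := by
    intro v; rw [card_neighborFinset_eq_degree]; exact hreg v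
  apply le_antisymm
  · -- g ≤ n - 2d
    obtain ⟨f, hf1, hf2, hw⟩ := hg.1
    set D : Finset V := Finset.univ.filter (fun v => f v = -1) with hDdef
    have hDmem : ∀ v, v ∈ D ↔ f v = -1 := by
      intro v; simp [hDdef]
    have hcond : ∀ v : V, (r + 1) / 2 ≤ (G.neighborFinset v ∩ D).card := by
      intro v
      have := hf2 v
      rw [sum_pm_eq f hf1 D hDmem, hcardN v] at this
      omega
    have hdle : d ≤ D.card := hd.2 ⟨D, hcond, rfl⟩
    have hweight : ∑ v, f v = (Fintype.card V : ℤ) - 2 * D.card := by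
      have := sum_pm_eq f hf1 D hDmem Finset.univ
      simpa [Finset.univ_inter, Finset.card_univ] using this
    rw [hw, hweight]
    have : (d : ℤ) ≤ D.card := by exact_mod_cast hdle
    linarith
  · -- n - 2d ≤ g
    obtain ⟨D, hD, hcard⟩ := hd.1
    set f : V → ℤ := fun v => if v ∈ D then -1 else 1 with hfdef
    have hf1 : ∀ v, f v = 1 ∨ f v = -1 := by
      intro v; by_cases h : v ∈ D <;> simp [hfdef, h]
    have hDmem : ∀ v, v ∈ D ↔ f v = -1 := by
      intro v; by_cases h : v ∈ D <;> simp [hfdef, h]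
    have hf2 : ∀ v : V, ∑ u ∈ G.neighborFinset v, f u ≤ 0 := by
      intro v
      rw [sum_pm_eq f hf1 D hDmem, hcardN v]
      have := hD v
      omega
    have hweight : ∑ v, f v = (Fintype.card V : ℤ) - 2 * d := by
      have := sum_pm_eq f hf1 D hDmem Finset.univ
      simpa [Finset.univ_inter, Finset.card_univ, hcard] using this
    have := hg.2 ⟨f, hf1, hf2, hweight.symm⟩
    linarith
end

section
/- If G is an r-regular graph with r odd, then the inverse signed total domination number equals the negative of the signed total domination number: γ⁰_st(G) = -γ_st(G). -/
/-!
For odd `r`, every neighbourhood sum of a `±1`-valued function on an `r`-regular graph is a sum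
of an odd number of odd terms, hence odd and in particular nonzero. So `f ↦ -f` exchanges the
conditions "every neighbourhood sum is `≤ 0`" and "every neighbourhood sum is `≥ 1`", and the
weights of inverse signed total dominating functions are exactly the negatives of the weights of
signed total dominating functions.
-/

open SimpleGraph Finset
open scoped Pointwise

theorem IsLeast.neg {α : Type*} [AddGroup α] [Preorder α] [AddLeftMono α] [AddRightMono α]
    {s : Set α} {a : α} (h : IsLeast s a) : IsGreatest (-s) (-a) :=
  ⟨Set.neg_mem_neg.2 h.1, h.isGLB.neg.1⟩

/-- Every `±1` is `1` modulo `2`, so the parity of such a sum is that of the number of terms. -/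
theorem Finset.odd_sum_of_forall_eq_one_or_neg_one {ι : Type*} {s : Finset ι} {f : ι → ℤ}
    (hf : ∀ i ∈ s, f i = 1 ∨ f i = -1) (hs : Odd #s) : Odd (∑ i ∈ s, f i) := by
  have hf_mod_two : ∀ i ∈ s, (f i : ZMod 2) = 1 := fun i hi => by
    rcases hf i hi with h | h <;> rw [h] <;> decide
  rw [← ZMod.intCast_eq_one_iff_odd, Int.cast_sum, Finset.sum_congr rfl hf_mod_two, Finset.sum_const,
    nsmul_one, ZMod.natCast_eq_one_iff_odd]
  exact hs

namespace SimpleGraph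

variable {V : Type*} [Fintype V] (G : SimpleGraph V) [DecidableRel G.Adj]

/-- `γ_st(G)` is the least element of this set, and `γ⁰_st(G)` the greatest element of
`inverseSignedTotalDominationWeights G`. -/
def signedTotalDominationWeights : Set ℤ :=
  {w | ∃ f : V → ℤ, (∀ v, f v = 1 ∨ f v = -1) ∧
    (∀ v : V, 1 ≤ ∑ u ∈ G.neighborFinset v, f u) ∧ w = ∑ v, f v}

def inverseSignedTotalDominationWeights : Set ℤ :=
  {w | ∃ f : V → ℤ, (∀ v, f v = 1 ∨ f v = -1) ∧
    (∀ v : V, ∑ u ∈ G.neighborFinset v, f u ≤ 0) ∧ w = ∑ v, f v}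

variable {G} {r : ℕ}

theorem odd_sum_neighborFinset_of_odd_regular (hr : Odd r) (hreg : G.IsRegularOfDegree r)
    {f : V → ℤ} (hf : ∀ v, f v = 1 ∨ f v = -1) (v : V) :
    Odd (∑ u ∈ G.neighborFinset v, f u) :=
  Finset.odd_sum_of_forall_eq_one_or_neg_one (fun u _ => hf u)
    (by rwa [card_neighborFinset_eq_degree, hreg v])

theorem inverseSignedTotalDominationWeights_eq_neg (hr : Odd r) (hreg : G.IsRegularOfDegree r) :
    G.inverseSignedTotalDominationWeights = -G.signedTotalDominationWeights := by
  ext w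
  simp only [inverseSignedTotalDominationWeights, signedTotalDominationWeights, Set.mem_neg,
    Set.mem_ofPred_eq]
  constructor
  · rintro ⟨f, hf, hdom, rfl⟩
    refine ⟨-f, fun v => ?_, fun v => ?_, by simp⟩
    · rcases hf v with h | h <;> simp [h]
    · obtain ⟨k, hk⟩ := odd_sum_neighborFinset_of_odd_regular hr hreg hf v
      have := hdom v
      simp only [Pi.neg_apply, sum_neg_distrib]
      omega
  · rintro ⟨f, hf, hdom, hw⟩
    refine ⟨-f, fun v => ?_, fun v => ?_, by simp [← hw]⟩
    · rcases hf v with h | h <;> simp [h]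
    · have := hdom v
      simp only [Pi.neg_apply, sum_neg_distrib]
      omega

end SimpleGraph

theorem istdn_eq_neg_stdn_of_odd_regular_general {V : Type*} [Fintype V]
    (G : SimpleGraph V) [DecidableRel G.Adj] (r : ℕ) (hr : Odd r)
    (hreg : G.IsRegularOfDegree r)
    (g s : ℤ)
    (hg : IsGreatest {w : ℤ | ∃ f : V → ℤ,
        (∀ v, f v = 1 ∨ f v = -1) ∧
        (∀ v : V, ∑ u ∈ G.neighborFinset v, f u ≤ 0) ∧
        w = ∑ v, f v} g)
    (hs : IsLeast {w : ℤ | ∃ f : V → ℤ,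
        (∀ v, f v = 1 ∨ f v = -1) ∧
        (∀ v : V, 1 ≤ ∑ u ∈ G.neighborFinset v, f u) ∧
        w = ∑ v, f v} s) :
    g = -s := by
  change IsGreatest G.inverseSignedTotalDominationWeights g at hg
  change IsLeast G.signedTotalDominationWeights s at hs
  rw [inverseSignedTotalDominationWeights_eq_neg hr hreg] at hg
  exact hg.unique hs.neg

/-- If `G` is `r`-regular with `r` odd, then `γ⁰_st(G) = -γ_st(G)`. -/
theorem istdn_eq_neg_stdn_of_odd_regular {V : Type*} [Fintype V] [DecidableEq V]
    (G : SimpleGraph V) [DecidableRel G.Adj] (r : ℕ) (hr : Odd r)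
    (hreg : G.IsRegularOfDegree r)
    (g s : ℤ)
    (hg : IsGreatest {w : ℤ | ∃ f : V → ℤ,
        (∀ v, f v = 1 ∨ f v = -1) ∧
        (∀ v : V, ∑ u ∈ G.neighborFinset v, f u ≤ 0) ∧
        w = ∑ v, f v} g)
    (hs : IsLeast {w : ℤ | ∃ f : V → ℤ,
        (∀ v, f v = 1 ∨ f v = -1) ∧
        (∀ v : V, 1 ≤ ∑ u ∈ G.neighborFinset v, f u) ∧
        w = ∑ v, f v} s) :
    g = -s :=
  istdn_eq_neg_stdn_of_odd_regular_general G r hr hreg g s hg hs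
end

section
/- If G is an r-regular graph of order n with r ≥ 2 even, then ((1-r)/(1+r))·n ≤ γ⁰_st(G) ≤ 0. -/
/-!
Take a maximum-weight inverse signed total dominating function `f`, with positive set `P` and
negative set `M`. Summing the defining inequalities over all vertices gives `r · ∑ f ≤ 0`.
For the lower bound, call `u` tight if its neighbourhood sum vanishes; a tight vertex has equally
many neighbours in `P` and in `M`. Every `v ∈ M` has a tight neighbour: when `r` is even every
neighbourhood sum is even, so otherwise all neighbours of `v` have sum `≤ -2` and flipping `f v`
to `1` would give a heavier function. Double counting edges between `M`, the tight vertices and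
`P` yields `|M| ≤ r |P|`, which is the lower bound.
-/

open SimpleGraph Finset

namespace SimpleGraph

variable {V : Type*} [Fintype V] (G : SimpleGraph V) [DecidableRel G.Adj]

def inverseSignedTotalDominatingWeights : Set ℤ :=
  {w : ℤ | ∃ f : V → ℤ,
    (∀ v, f v = 1 ∨ f v = -1) ∧
    (∀ v : V, ∑ u ∈ G.neighborFinset v, f u ≤ 0) ∧
    w = ∑ v, f v}

theorem sum_sum_neighborFinset_eq_sum_degree_nsmul {M : Type*} [AddCommMonoid M] (f : V → M) :
    ∑ v, ∑ u ∈ G.neighborFinset v, f u = ∑ u, G.degree u • f u := by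
  rw [Finset.sum_comm' (t' := univ) (s' := fun u => G.neighborFinset u) (f := fun _ u => f u)
    fun v u => by simp [adj_comm]]
  simp only [sum_const, card_neighborFinset_eq_degree]

theorem sum_card_neighborFinset_inter_comm [DecidableEq V] (A B : Finset V) :
    ∑ u ∈ A, #(G.neighborFinset u ∩ B) = ∑ v ∈ B, #(G.neighborFinset v ∩ A) := by
  convert sum_card_bipartiteAbove_eq_sum_card_bipartiteBelow G.Adj (s := A) (t := B) using 3 <;>
    ext <;> simp [bipartiteAbove, bipartiteBelow, adj_comm, and_comm]

variable {G}

theorem IsRegularOfDegree.sum_nonpos_of_sum_neighborFinset_nonpos {r : ℕ}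
    (hreg : G.IsRegularOfDegree r) (hr : 0 < r) {f : V → ℤ}
    (hdom : ∀ v, ∑ u ∈ G.neighborFinset v, f u ≤ 0) : ∑ v, f v ≤ 0 := by
  have h : ∑ v, ∑ u ∈ G.neighborFinset v, f u = r * ∑ v, f v := by
    simp only [sum_sum_neighborFinset_eq_sum_degree_nsmul, hreg.degree_eq, nsmul_eq_mul, mul_sum]
  have hsum : (r : ℤ) * ∑ v, f v ≤ 0 := h ▸ sum_nonpos fun v _ => hdom v
  exact nonpos_of_mul_nonpos_right hsum (by exact_mod_cast hr)

end SimpleGraph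

section SignFunction

variable {V : Type*} {f : V → ℤ}

theorem sum_eq_card_filter_sub_card_filter_of_sign (hsign : ∀ v, f v = 1 ∨ f v = -1)
    (s : Finset V) : ∑ w ∈ s, f w = #{w ∈ s | f w = 1} - #{w ∈ s | f w = -1} := by
  calc ∑ w ∈ s, f w
      = ∑ w ∈ s, ((if f w = 1 then 1 else 0) - (if f w = -1 then 1 else 0)) :=
        sum_congr rfl fun w _ => by rcases hsign w with h | h <;> simp [h]
    _ = _ := by rw [sum_sub_distrib, sum_boole, sum_boole]

theorem card_filter_add_card_filter_of_sign (hsign : ∀ v, f v = 1 ∨ f v = -1)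
    (s : Finset V) : #{w ∈ s | f w = 1} + #{w ∈ s | f w = -1} = #s := by
  rw [← card_filter_add_card_filter_not (s := s) (p := fun w => f w = 1)]
  congr 2
  exact filter_congr fun w _ => by rcases hsign w with h | h <;> simp [h]

theorem even_sum_of_sign (hsign : ∀ v, f v = 1 ∨ f v = -1) {s : Finset V} (hs : Even #s) :
    Even (∑ w ∈ s, f w) := by
  have hsum := sum_eq_card_filter_sub_card_filter_of_sign hsign s
  have hcard := card_filter_add_card_filter_of_sign hsign s
  obtain ⟨k, hk⟩ := hs
  exact ⟨k - #{w ∈ s | f w = -1}, by omega⟩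

end SignFunction

namespace SimpleGraph

variable {V : Type*} [Fintype V] {G : SimpleGraph V} [DecidableRel G.Adj] {f : V → ℤ}

theorem sum_add_two_mem_inverseSignedTotalDominatingWeights [DecidableEq V]
    (hsign : ∀ v, f v = 1 ∨ f v = -1) (hdom : ∀ v, ∑ u ∈ G.neighborFinset v, f u ≤ 0)
    {v : V} (hv : f v = -1)
    (hnbr : ∀ u ∈ G.neighborFinset v, ∑ w ∈ G.neighborFinset u, f w ≤ -2) :
    ∑ w, f w + 2 ∈ G.inverseSignedTotalDominatingWeights := by
  have hsum (s : Finset V) :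
      ∑ w ∈ s, (f + Pi.single v 2 : V → ℤ) w =
        ∑ w ∈ s, f w + if v ∈ s then 2 else 0 := by
    simp only [Pi.add_apply, sum_add_distrib, sum_pi_single']
  refine ⟨f + Pi.single v 2, fun w => ?_, fun u => ?_, by rw [hsum, if_pos (mem_univ v)]⟩
  · rcases eq_or_ne w v with rfl | hw
    · simp [hv]
    · simpa [hw] using hsign w
  · rw [hsum]
    split_ifs with hvu
    · linarith [hnbr u (by simpa [adj_comm] using hvu)]
    · simpa using hdom u

theorem IsRegularOfDegree.exists_neighbor_sum_eq_zero {r : ℕ} (hreg : G.IsRegularOfDegree r)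
    (hr : Even r) (hsign : ∀ v, f v = 1 ∨ f v = -1)
    (hdom : ∀ v, ∑ u ∈ G.neighborFinset v, f u ≤ 0)
    (hmax : IsGreatest G.inverseSignedTotalDominatingWeights (∑ w, f w))
    {v : V} (hv : f v = -1) :
    ∃ u ∈ G.neighborFinset v, ∑ w ∈ G.neighborFinset u, f w = 0 := by
  classical
  by_contra! hne
  have hnbr (u) (hu : u ∈ G.neighborFinset v) : ∑ w ∈ G.neighborFinset u, f w ≤ -2 := by
    have heven : Even (∑ w ∈ G.neighborFinset u, f w) :=
      even_sum_of_sign hsign (by rwa [card_neighborFinset_eq_degree, hreg.degree_eq])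
    obtain ⟨k, hk⟩ := heven
    have := hdom u
    have := hne u hu
    omega
  have := hmax.2 (sum_add_two_mem_inverseSignedTotalDominatingWeights hsign hdom hv hnbr)
  omega

theorem IsRegularOfDegree.card_neg_le_mul_card_pos [DecidableEq V] {r : ℕ}
    (hreg : G.IsRegularOfDegree r) (hsign : ∀ v, f v = 1 ∨ f v = -1)
    (htight : ∀ v, f v = -1 →
      ∃ u ∈ G.neighborFinset v, ∑ w ∈ G.neighborFinset u, f w = 0) :
    #{v | f v = -1} ≤ r * #{v | f v = 1} := by
  set P : Finset V := {v | f v = 1}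
  set M : Finset V := {v | f v = -1}
  set T : Finset V := {u | ∑ w ∈ G.neighborFinset u, f w = 0}
  have hbalanced (u) (hu : u ∈ T) :
      #(G.neighborFinset u ∩ M) = #(G.neighborFinset u ∩ P) := by
    have h := sum_eq_card_filter_sub_card_filter_of_sign hsign (G.neighborFinset u)
    simp only [T, mem_filter, mem_univ, true_and] at hu
    simp only [P, M, inter_filter, inter_univ]
    omega
  calc #M = #M • 1 := by rw [smul_eq_mul, mul_one]
    _ ≤ ∑ v ∈ M, #(G.neighborFinset v ∩ T) := card_nsmul_le_sum _ _ _ fun v hv => by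
        obtain ⟨u, hu, hu0⟩ := htight v (mem_filter.1 hv).2
        exact card_pos.2 ⟨u, mem_inter.2 ⟨hu, by simpa [T] using hu0⟩⟩
    _ = ∑ u ∈ T, #(G.neighborFinset u ∩ M) := sum_card_neighborFinset_inter_comm G M T
    _ = ∑ u ∈ T, #(G.neighborFinset u ∩ P) := sum_congr rfl hbalanced
    _ = ∑ v ∈ P, #(G.neighborFinset v ∩ T) := sum_card_neighborFinset_inter_comm G T P
    _ ≤ ∑ v ∈ P, r := sum_le_sum fun v _ =>
        (card_le_card inter_subset_left).trans_eq (by rw [card_neighborFinset_eq_degree, hreg v])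
    _ = r * #P := by rw [sum_const, smul_eq_mul, mul_comm]

end SimpleGraph

theorem istdn_even_regular_bounds_general {V : Type*} [Fintype V]
    (G : SimpleGraph V) [DecidableRel G.Adj] (r : ℕ) (hr2 : 2 ≤ r) (hr : Even r)
    (hreg : G.IsRegularOfDegree r)
    (g : ℤ)
    (hg : IsGreatest {w : ℤ | ∃ f : V → ℤ,
        (∀ v, f v = 1 ∨ f v = -1) ∧
        (∀ v : V, ∑ u ∈ G.neighborFinset v, f u ≤ 0) ∧
        w = ∑ v, f v} g) :
    ((1 - (r : ℚ)) / (1 + (r : ℚ))) * (Fintype.card V : ℚ) ≤ (g : ℚ) ∧ g ≤ 0 := by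
  classical
  obtain ⟨f, hsign, hdom, rfl⟩ := hg.1
  refine ⟨?_, hreg.sum_nonpos_of_sum_neighborFinset_nonpos (by omega) hdom⟩
  have hM : #{v | f v = -1} ≤ r * #{v | f v = 1} :=
    hreg.card_neg_le_mul_card_pos hsign fun v =>
      hreg.exists_neighbor_sum_eq_zero hr hsign hdom hg
  have hsum := sum_eq_card_filter_sub_card_filter_of_sign hsign univ
  have hcard := card_filter_add_card_filter_of_sign hsign univ
  rw [div_mul_eq_mul_div, div_le_iff₀ (by positivity), ← card_univ, ← hcard, hsum]
  have hMℚ : (#{v | f v = -1} : ℚ) ≤ r * #{v | f v = 1} := by exact_mod_cast hM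
  push_cast
  linarith

/-- If `G` is `r`-regular of order `n` with `r ≥ 2` even, then
`((1-r)/(1+r))·n ≤ γ⁰_st(G) ≤ 0`. -/
theorem istdn_even_regular_bounds {V : Type*} [Fintype V] [DecidableEq V]
    (G : SimpleGraph V) [DecidableRel G.Adj] (r : ℕ) (hr2 : 2 ≤ r) (hr : Even r)
    (hreg : G.IsRegularOfDegree r)
    (g : ℤ)
    (hg : IsGreatest {w : ℤ | ∃ f : V → ℤ,
        (∀ v, f v = 1 ∨ f v = -1) ∧
        (∀ v : V, ∑ u ∈ G.neighborFinset v, f u ≤ 0) ∧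
        w = ∑ v, f v} g) :
    ((1 - (r : ℚ)) / (1 + (r : ℚ))) * (Fintype.card V : ℚ) ≤ (g : ℚ) ∧ g ≤ 0 :=
  istdn_even_regular_bounds_general G r hr2 hr hreg g hg
end

section
/- For every integer k (positive, negative, or zero), there exists a tree T with γ⁰_st(T) = k. -/
open SimpleGraph Finset

/-!
Hanging two pendant leaves on every vertex of a tree `S` gives a tree, the corona `S ∘ K̄₂`.
There a leaf forces its neighbour to `-1`, so every vertex of `S` gets `-1`; the condition at a
vertex `v` of `S` then reads `f(leaf₁) + f(leaf₂) ≤ deg_S v`, which lets both leaves of `v` be `+1`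
when `deg_S v ≥ 2` and exactly one of them otherwise. Hence
`γ⁰_st(S ∘ K̄₂) = #{v | deg_S v ≥ 2} - #{v | deg_S v ≤ 1}`, which is `n - 2` for the path on
`n + 2` vertices and `-(t + 1)` for the star with `t + 2` leaves.
-/

namespace SimpleGraph

variable {V W : Type*}

/-- Weights of the inverse signed total dominating functions of `G`; `γ⁰_st(G)` is the greatest
one. -/
def istdfWeights (G : SimpleGraph V) [Fintype V] [DecidableRel G.Adj] : Set ℤ :=
  {w | ∃ f : V → ℤ, (∀ v, f v = 1 ∨ f v = -1) ∧
    (∀ v, ∑ u ∈ G.neighborFinset v, f u ≤ 0) ∧ w = ∑ v, f v}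

section Finite

variable [Fintype V] [Fintype W] {G : SimpleGraph V} {H : SimpleGraph W}
  [DecidableRel G.Adj] [DecidableRel H.Adj]

lemma isTree_iff_connected_and_sum_degrees :
    G.IsTree ↔ G.Connected ∧ ∑ v, G.degree v + 2 = 2 * Fintype.card V := by
  rw [isTree_iff_connected_and_card, sum_degrees_eq_twice_card_edges, Nat.card_eq_fintype_card,
    Nat.card_eq_fintype_card, ← edgeFinset_card]
  constructor <;> rintro ⟨hc, h⟩ <;> exact ⟨hc, by omega⟩

lemma istdfWeights_subset_of_iso (e : G ≃g H) : H.istdfWeights ⊆ G.istdfWeights := by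
  rintro _ ⟨f, hsign, hnbhd, rfl⟩
  refine ⟨f ∘ e, fun v ↦ hsign (e v), fun v ↦ ?_, (e.toEquiv.sum_comp f).symm⟩
  calc ∑ u ∈ G.neighborFinset v, f (e u) = ∑ u ∈ H.neighborFinset (e v), f u :=
        sum_equiv e.toEquiv (by simp [e.map_adj_iff]) (by simp)
    _ ≤ 0 := hnbhd (e v)

lemma Iso.istdfWeights_eq (e : G ≃g H) : G.istdfWeights = H.istdfWeights :=
  (istdfWeights_subset_of_iso e.symm).antisymm (istdfWeights_subset_of_iso e)

lemma eq_neg_one_of_neighborFinset_eq_singleton {f : V → ℤ} (hsign : ∀ v, f v = 1 ∨ f v = -1)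
    (hnbhd : ∀ v, ∑ u ∈ G.neighborFinset v, f u ≤ 0) {v u : V}
    (hv : G.neighborFinset v = {u}) : f u = -1 := by
  have := hnbhd v
  rw [hv, sum_singleton] at this
  grind

lemma exists_fin_tree_of_isTree (hG : G.IsTree) {k : ℤ} (hk : IsGreatest G.istdfWeights k) :
    ∃ (n : ℕ) (T : SimpleGraph (Fin n)) (_ : DecidableRel T.Adj),
      T.Connected ∧ T.IsAcyclic ∧ IsGreatest T.istdfWeights k := by
  classical
  let e := G.overFinIso rfl
  exact ⟨_, _, inferInstance, (e.isTree_iff.mp hG).connected, (e.isTree_iff.mp hG).isAcyclic,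
    e.istdfWeights_eq ▸ hk⟩

end Finite

/-- The corona `S ∘ K̄₂`: every vertex `(v, 0)` of a copy of `S` gets the two pendant leaves
`(v, 1)` and `(v, 2)`. -/
def coronaTwoLeaves (S : SimpleGraph V) : SimpleGraph (V × Fin 3) where
  Adj x y := x.2 = 0 ∧ y.2 = 0 ∧ S.Adj x.1 y.1 ∨ x.1 = y.1 ∧ x.2 ≠ y.2 ∧ (x.2 = 0 ∨ y.2 = 0)
  symm := ⟨by
    rintro x y (⟨hx, hy, h⟩ | ⟨h, hne, h0⟩)
    exacts [Or.inl ⟨hy, hx, h.symm⟩, Or.inr ⟨h.symm, hne.symm, h0.symm⟩]⟩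
  loopless := ⟨fun x ↦ by simp⟩

namespace coronaTwoLeaves

variable (S : SimpleGraph V)

lemma adj_iff {x y : V × Fin 3} : S.coronaTwoLeaves.Adj x y ↔
    x.2 = 0 ∧ y.2 = 0 ∧ S.Adj x.1 y.1 ∨ x.1 = y.1 ∧ x.2 ≠ y.2 ∧ (x.2 = 0 ∨ y.2 = 0) :=
  Iff.rfl

instance [DecidableEq V] [DecidableRel S.Adj] : DecidableRel S.coronaTwoLeaves.Adj :=
  fun _ _ ↦ decidable_of_iff _ (adj_iff S).symm

def coreHom : S →g S.coronaTwoLeaves where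
  toFun v := (v, 0)
  map_rel' h := Or.inl ⟨rfl, rfl, h⟩

variable [Fintype V] [DecidableEq V] [DecidableRel S.Adj]

lemma neighborFinset_leaf {v : V} {i : Fin 3} (hi : i ≠ 0) :
    S.coronaTwoLeaves.neighborFinset (v, i) = {(v, 0)} := by
  ext ⟨w, j⟩
  simp only [mem_neighborFinset, adj_iff, mem_singleton, Prod.mk.injEq]
  grind

lemma neighborFinset_core (v : V) :
    S.coronaTwoLeaves.neighborFinset (v, 0) =
      insert (v, 1) (insert (v, 2) ((S.neighborFinset v).map (.sectL V (0 : Fin 3)))) := by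
  ext ⟨w, j⟩
  simp only [mem_neighborFinset, adj_iff, mem_insert, mem_map, Function.Embedding.sectL_apply,
    Prod.mk.injEq]
  grind

lemma sum_neighborFinset_core (f : V × Fin 3 → ℤ) (v : V) :
    ∑ x ∈ S.coronaTwoLeaves.neighborFinset (v, 0), f x =
      f (v, 1) + f (v, 2) + ∑ w ∈ S.neighborFinset v, f (w, 0) := by
  rw [neighborFinset_core, sum_insert (by simp), sum_insert (by simp), sum_map, add_assoc]
  rfl

lemma degree_core (v : V) : S.coronaTwoLeaves.degree (v, 0) = S.degree v + 2 := by
  rw [← card_neighborFinset_eq_degree, neighborFinset_core, card_insert_of_notMem (by simp),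
    card_insert_of_notMem (by simp), card_map, card_neighborFinset_eq_degree]

lemma degree_leaf {v : V} {i : Fin 3} (hi : i ≠ 0) : S.coronaTwoLeaves.degree (v, i) = 1 := by
  rw [← card_neighborFinset_eq_degree, neighborFinset_leaf S hi, card_singleton]

omit [Fintype V] [DecidableEq V] [DecidableRel S.Adj] in
lemma connected (hS : S.Connected) : S.coronaTwoLeaves.Connected := by
  have hcore (x : V × Fin 3) : S.coronaTwoLeaves.Reachable x (x.1, 0) := by
    by_cases hi : x.2 = 0
    · rw [← hi]
    · exact Adj.reachable (Or.inr ⟨rfl, hi, Or.inr rfl⟩)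
  have := hS.nonempty
  exact Connected.mk fun x y ↦
    (hcore x).trans (((hS x.1 y.1).map (coreHom S)).trans (hcore y).symm)

lemma isTree (hS : S.IsTree) : S.coronaTwoLeaves.IsTree := by
  have hsum := (isTree_iff_connected_and_sum_degrees.mp hS).2
  refine isTree_iff_connected_and_sum_degrees.mpr ⟨connected S hS.connected, ?_⟩
  simp only [Fintype.sum_prod_type, Fin.sum_univ_three, degree_core,
    degree_leaf S one_ne_zero, degree_leaf S (show (2 : Fin 3) ≠ 0 by decide),
    sum_add_distrib, sum_const, card_univ, Fintype.card_prod, Fintype.card_fin, smul_eq_mul]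
  omega

lemma core_add_leaves_le {f : V × Fin 3 → ℤ} (hsign : ∀ x, f x = 1 ∨ f x = -1)
    (hnbhd : ∀ x, ∑ y ∈ S.coronaTwoLeaves.neighborFinset x, f y ≤ 0) (v : V) :
    f (v, 0) + f (v, 1) + f (v, 2) ≤ if 2 ≤ S.degree v then 1 else -1 := by
  have hcore (w : V) : f (w, 0) = -1 :=
    eq_neg_one_of_neighborFinset_eq_singleton hsign hnbhd (neighborFinset_leaf S one_ne_zero)
  have hv := hnbhd (v, 0)
  simp only [sum_neighborFinset_core, hcore, sum_const, card_neighborFinset_eq_degree,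
    nsmul_eq_mul, mul_neg, mul_one] at hv
  rw [hcore v]
  rcases hsign (v, 1) with h1 | h1 <;> rcases hsign (v, 2) with h2 | h2 <;> split_ifs <;> omega

lemma isGreatest_istdfWeights :
    IsGreatest S.coronaTwoLeaves.istdfWeights (∑ v, if 2 ≤ S.degree v then 1 else -1) := by
  constructor
  · refine ⟨fun x ↦ if x.2 = 0 then -1 else if x.2 = 1 then 1 else
      if 2 ≤ S.degree x.1 then 1 else -1, fun x ↦ by dsimp only; split_ifs <;> simp, ?_, ?_⟩
    · rintro ⟨v, i⟩
      by_cases hi : i = 0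
      · subst hi
        simp only [sum_neighborFinset_core, one_ne_zero, Fin.reduceEq, ↓reduceIte, sum_neg_distrib,
          sum_const, card_neighborFinset_eq_degree, Int.nsmul_eq_mul, mul_one]
        split_ifs <;> omega
      · simp [neighborFinset_leaf S hi]
    · simp [Fintype.sum_prod_type, Fin.sum_univ_three]
  · rintro _ ⟨f, hsign, hnbhd, rfl⟩
    rw [Fintype.sum_prod_type]
    exact sum_le_sum fun v _ ↦ by
      simpa only [Fin.sum_univ_three] using core_add_leaves_le S hsign hnbhd v

end coronaTwoLeaves

instance (n : ℕ) : DecidableRel (pathGraph n).Adj :=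
  fun _ _ ↦ decidable_of_iff _ pathGraph_adj.symm

lemma sum_fin_ite_ends {M : Type*} [AddCommMonoid M] (n : ℕ) (a b : M) :
    ∑ i : Fin (n + 2), (if (i : ℕ) = 0 ∨ (i : ℕ) = n + 1 then a else b) = 2 • a + n • b := by
  rw [Fin.sum_univ_succ, Fin.sum_univ_castSucc]
  simp [fun x : Fin n ↦ x.isLt.ne, two_nsmul, add_comm, add_assoc]

lemma degree_pathGraph {n : ℕ} (i : Fin (n + 2)) :
    (pathGraph (n + 2)).degree i = if (i : ℕ) = 0 ∨ (i : ℕ) = n + 1 then 1 else 2 := by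
  rw [← card_neighborFinset_eq_degree]
  split_ifs with h
  · rw [card_eq_one]
    rcases h with h | h
    · exact ⟨1, by ext j; simp [pathGraph_adj, Fin.ext_iff]; omega⟩
    · exact ⟨⟨n, by omega⟩, by ext j; simp [pathGraph_adj, Fin.ext_iff]; omega⟩
  · rw [card_eq_two]
    exact ⟨⟨i - 1, by omega⟩, ⟨i + 1, by omega⟩, by simp [Fin.ext_iff],
      by ext j; simp [pathGraph_adj, Fin.ext_iff]; omega⟩

lemma isTree_pathGraph (n : ℕ) : (pathGraph (n + 2)).IsTree :=
  isTree_iff_connected_and_sum_degrees.mpr ⟨pathGraph_connected _, by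
    simp only [degree_pathGraph, sum_fin_ite_ends, smul_eq_mul, Fintype.card_fin]
    omega⟩

lemma sum_pathGraph (n : ℕ) :
    ∑ v : Fin (n + 2), (if 2 ≤ (pathGraph (n + 2)).degree v then 1 else -1 : ℤ) = n - 2 := by
  calc _ = ∑ v : Fin (n + 2), (if (v : ℕ) = 0 ∨ (v : ℕ) = n + 1 then -1 else 1 : ℤ) :=
        sum_congr rfl fun v _ ↦ by rw [degree_pathGraph]; split_ifs <;> omega
    _ = n - 2 := by rw [sum_fin_ite_ends, nsmul_eq_mul, nsmul_eq_mul]; push_cast; ring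

lemma sum_starGraph (t : ℕ) :
    ∑ v : Fin (t + 3), (if 2 ≤ (starGraph 0).degree v then 1 else -1 : ℤ) = -(t + 1) := by
  rw [Fin.sum_univ_succ]
  simp [degree_starGraph_center, degree_starGraph_of_ne_center, Fin.succ_ne_zero, ← add_assoc]

end SimpleGraph

/-- For every integer `k` there exists a tree `T` with `γ⁰_st(T) = k`. -/
theorem exists_tree_istdn_eq (k : ℤ) :
    ∃ (n : ℕ) (T : SimpleGraph (Fin n)) (_ : DecidableRel T.Adj),
      T.Connected ∧ T.IsAcyclic ∧
      IsGreatest {w : ℤ | ∃ f : Fin n → ℤ,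
          (∀ v, f v = 1 ∨ f v = -1) ∧
          (∀ v : Fin n, ∑ u ∈ T.neighborFinset v, f u ≤ 0) ∧
          w = ∑ v, f v} k := by
  rcases le_or_gt (-2) k with hk | hk
  · obtain ⟨n, rfl⟩ : ∃ n : ℕ, k = n - 2 := ⟨(k + 2).toNat, by omega⟩
    rw [← sum_pathGraph]
    exact exists_fin_tree_of_isTree (coronaTwoLeaves.isTree _ (isTree_pathGraph n))
      (coronaTwoLeaves.isGreatest_istdfWeights _)
  · obtain ⟨t, rfl⟩ : ∃ t : ℕ, k = -(t + 1) := ⟨(-k - 1).toNat, by omega⟩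
    rw [← sum_starGraph]
    exact exists_fin_tree_of_isTree (coronaTwoLeaves.isTree _ (isTree_starGraph 0))
      (coronaTwoLeaves.isGreatest_istdfWeights _)
end

section
/- Let T be a tree with support vertices v_1, ..., v_s, where v_i is adjacent to ℓ_i leaves. Then there exists an ISTDF f of T of maximum weight γ⁰_st(T) such that, for each i, at least ⌊ℓ_i/2⌋ of the leaves adjacent to v_i receive the value 1 under f. -/
open SimpleGraph Finset

lemma sum_update_eq {V : Type*} [DecidableEq V] (s : Finset V) (f : V → ℤ) (x : V) (a : ℤ) :
    ∑ u ∈ s, Function.update f x a u = ∑ u ∈ s, f u + (if x ∈ s then a - f x else 0) := by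
  split_ifs with h
  · rw [Finset.sum_update_of_mem h, Finset.sum_eq_sum_sdiff_singleton_add h f]
    ring
  · rw [add_zero]
    exact Finset.sum_congr rfl fun y hy => Function.update_of_ne (by rintro rfl; exact h hy) _ _

lemma leaf_nbr_unique {V : Type*} [Fintype V] [DecidableEq V] (T : SimpleGraph V)
    [DecidableRel T.Adj] {u v z : V} (hd : T.degree u = 1)
    (hv : v ∈ T.neighborFinset u) (hz : z ∈ T.neighborFinset u) : z = v := by
  rw [← SimpleGraph.card_neighborFinset_eq_degree] at hd
  obtain ⟨x, hx⟩ := Finset.card_eq_one.mp hd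
  rw [hx, Finset.mem_singleton] at hv hz
  rw [hv, hz]

/-- In a tree `T`, there exists a maximum ISTDF `f` which, for every support
vertex `v` with `ℓ_v` adjacent leaves, assigns `1` to at least `⌊ℓ_v/2⌋` of the
leaves adjacent to `v`. -/
theorem exists_max_istdf_on_leaves {V : Type*} [Fintype V] [DecidableEq V]
    (T : SimpleGraph V) [DecidableRel T.Adj]
    (hconn : T.Connected) (hacyc : T.IsAcyclic) :
    ∃ f : V → ℤ,
      (∀ v, f v = 1 ∨ f v = -1) ∧
      (∀ v : V, ∑ u ∈ T.neighborFinset v, f u ≤ 0) ∧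
      IsGreatest {w : ℤ | ∃ g : V → ℤ,
          (∀ v, g v = 1 ∨ g v = -1) ∧
          (∀ v : V, ∑ u ∈ T.neighborFinset v, g u ≤ 0) ∧
          w = ∑ v, g v} (∑ v, f v) ∧
      ∀ v : V, (∃ u ∈ T.neighborFinset v, T.degree u = 1) →
        ((T.neighborFinset v).filter (fun u => T.degree u = 1)).card / 2 ≤
          ((T.neighborFinset v).filter (fun u => T.degree u = 1 ∧ f u = 1)).card := by
  classical
  -- the set of achievable weights
  set P : ℤ → Prop := fun w => ∃ g : V → ℤ,
      (∀ v, g v = 1 ∨ g v = -1) ∧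
      (∀ v : V, ∑ u ∈ T.neighborFinset v, g u ≤ 0) ∧
      w = ∑ v, g v with hP
  have hbdd : ∃ b : ℤ, ∀ z, P z → z ≤ b := by
    refine ⟨(Fintype.card V : ℤ), ?_⟩
    rintro z ⟨g, hg1, -, rfl⟩
    calc ∑ v, g v ≤ ∑ _v : V, (1 : ℤ) :=
          Finset.sum_le_sum fun v _ => by rcases hg1 v with h | h <;> omega
      _ = (Fintype.card V : ℤ) := by simp
  have hinh : ∃ z, P z := by
    refine ⟨∑ _v : V, (-1 : ℤ), fun _ => -1, fun _ => Or.inr rfl, fun v => ?_, rfl⟩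
    simp
  obtain ⟨W, hWmem, hWmax⟩ := Int.exists_greatest_of_bdd hbdd hinh
  -- among maximum ISTDFs, maximize the number of leaves assigned 1
  set Q : ℤ → Prop := fun m => ∃ g : V → ℤ,
      (∀ v, g v = 1 ∨ g v = -1) ∧
      (∀ v : V, ∑ u ∈ T.neighborFinset v, g u ≤ 0) ∧
      (∑ v, g v) = W ∧
      ((Finset.univ.filter (fun y => T.degree y = 1 ∧ g y = 1)).card : ℤ) = m with hQ
  have hbdd2 : ∃ b : ℤ, ∀ z, Q z → z ≤ b := by
    refine ⟨(Fintype.card V : ℤ), ?_⟩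
    rintro z ⟨g, -, -, -, rfl⟩
    exact_mod_cast Nat.cast_le.mpr (le_trans (Finset.card_filter_le _ _) (le_of_eq Finset.card_univ))
  have hinh2 : ∃ z, Q z := by
    obtain ⟨g, hg1, hg2, hgW⟩ := hWmem
    exact ⟨_, g, hg1, hg2, hgW.symm, rfl⟩
  obtain ⟨m, ⟨f, hf1, hf2, hfW, hfm⟩, hmmax⟩ := Int.exists_greatest_of_bdd hbdd2 hinh2
  refine ⟨f, hf1, hf2, ⟨⟨f, hf1, hf2, rfl⟩, fun z hz => hfW ▸ hWmax z hz⟩, ?_⟩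
  intro v _hv
  by_cases hU : ∃ u ∈ T.neighborFinset v, T.degree u = 1 ∧ f u = -1
  · obtain ⟨u, huv, hud, hfu⟩ := hU
    have hvu : v ∈ T.neighborFinset u := by
      rw [SimpleGraph.mem_neighborFinset] at huv ⊢; exact huv.symm
    by_cases hWex : ∃ w ∈ T.neighborFinset v, T.degree w ≠ 1 ∧ f w = 1
    · -- Case A: swap a (-1)-leaf with a (+1)-non-leaf neighbor; contradicts maximality of m
      exfalso
      obtain ⟨w, hwv, hwd, hfw⟩ := hWex
      have huw : u ≠ w := by rintro rfl; exact hwd hud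
      set g : V → ℤ := Function.update (Function.update f u 1) w (-1) with hg
      have hgu : g u = 1 := by
        rw [hg, Function.update_of_ne huw, Function.update_self]
      have hgw : g w = -1 := by rw [hg, Function.update_self]
      have hgo : ∀ y, y ≠ u → y ≠ w → g y = f y := fun y h1 h2 => by
        rw [hg, Function.update_of_ne h2, Function.update_of_ne h1]
      have hg1 : ∀ y, g y = 1 ∨ g y = -1 := by
        intro y
        by_cases h1 : y = u
        · subst h1; exact Or.inl hgu
        by_cases h2 : y = w
        · subst h2; exact Or.inr hgw
        · rw [hgo y h1 h2]; exact hf1 y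
      have hsum : ∀ s : Finset V, ∑ x ∈ s, g x =
          ∑ x ∈ s, f x + (if u ∈ s then 2 else 0) + (if w ∈ s then -2 else 0) := by
        intro s
        rw [hg, sum_update_eq, sum_update_eq, Function.update_of_ne huw.symm, hfu, hfw]
        split_ifs <;> ring
      have hg2 : ∀ z, ∑ x ∈ T.neighborFinset z, g x ≤ 0 := by
        intro z
        rw [hsum]
        by_cases hu : u ∈ T.neighborFinset z
        · have hzv : z = v := leaf_nbr_unique T hud hvu
            (by rw [SimpleGraph.mem_neighborFinset] at hu ⊢; exact hu.symm)
          rw [hzv] at hu ⊢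
          rw [if_pos hu, if_pos hwv]
          linarith [hf2 v]
        · rw [if_neg hu, add_zero]
          split_ifs <;> linarith [hf2 z]
      have hgW : ∑ y, g y = W := by
        rw [hsum, if_pos (Finset.mem_univ u), if_pos (Finset.mem_univ w)]
        omega
      have hcard : (Finset.univ.filter (fun y => T.degree y = 1 ∧ g y = 1)) =
          insert u (Finset.univ.filter (fun y => T.degree y = 1 ∧ f y = 1)) := by
        ext y
        simp only [Finset.mem_insert, Finset.mem_filter, Finset.mem_univ, true_and]
        constructor
        · rintro ⟨hyd, hyg⟩
          by_cases h1 : y = u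
          · exact Or.inl h1
          · have h2 : y ≠ w := by rintro rfl; exact hwd hyd
            exact Or.inr ⟨hyd, by rw [← hgo y h1 h2]; exact hyg⟩
        · rintro (rfl | ⟨hyd, hyf⟩)
          · exact ⟨hud, hgu⟩
          · have h1 : y ≠ u := by rintro rfl; rw [hfu] at hyf; norm_num at hyf
            have h2 : y ≠ w := by rintro rfl; exact hwd hyd
            exact ⟨hyd, by rw [hgo y h1 h2]; exact hyf⟩
      have hnot : u ∉ Finset.univ.filter (fun y => T.degree y = 1 ∧ f y = 1) := by
        simp [hfu]
      have hle := hmmax _ ⟨g, hg1, hg2, hgW, rfl⟩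
      rw [hcard, Finset.card_insert_of_notMem hnot] at hle
      rw [← hfm] at hle
      push_cast at hle
      omega
    · -- Case B: all non-leaf neighbors of v carry -1
      push_neg at hWex
      have hWneg : ∀ w ∈ T.neighborFinset v, T.degree w ≠ 1 → f w = -1 := by
        intro w hw hwd
        rcases hf1 w with h | h
        · exact absurd h (hWex w hw hwd)
        · exact h
      -- the neighborhood sum at v is ≥ -1, else flipping u would improve the weight
      have hsumv : -1 ≤ ∑ x ∈ T.neighborFinset v, f x := by
        by_contra hcon
        push_neg at hcon
        set g : V → ℤ := Function.update f u 1 with hg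
        have hg1 : ∀ y, g y = 1 ∨ g y = -1 := by
          intro y
          by_cases h1 : y = u
          · subst h1; rw [hg, Function.update_self]; exact Or.inl rfl
          · rw [hg, Function.update_of_ne h1]; exact hf1 y
        have hsum : ∀ s : Finset V, ∑ x ∈ s, g x =
            ∑ x ∈ s, f x + (if u ∈ s then 2 else 0) := by
          intro s
          rw [hg, sum_update_eq, hfu]
          split_ifs <;> ring
        have hg2 : ∀ z, ∑ x ∈ T.neighborFinset z, g x ≤ 0 := by
          intro z
          rw [hsum]
          by_cases hu : u ∈ T.neighborFinset z
          · have hzv : z = v := leaf_nbr_unique T hud hvu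
              (by rw [SimpleGraph.mem_neighborFinset] at hu ⊢; exact hu.symm)
            rw [hzv] at hu ⊢
            rw [if_pos hu]
            omega
          · rw [if_neg hu, add_zero]
            exact hf2 z
        have := hWmax _ ⟨g, hg1, hg2, rfl⟩
        rw [hsum, if_pos (Finset.mem_univ u), hfW] at this
        omega
      -- arithmetic
      set L := (T.neighborFinset v).filter (fun y => T.degree y = 1) with hL
      set Pn := (T.neighborFinset v).filter (fun y => T.degree y = 1 ∧ f y = 1) with hPn
      have hsplit : ∑ x ∈ T.neighborFinset v, f x =
          ∑ x ∈ L, f x + ∑ x ∈ (T.neighborFinset v).filter (fun y => ¬ T.degree y = 1), f x := by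
        rw [hL, Finset.sum_filter_add_sum_filter_not]
      have hcomp : ∑ x ∈ (T.neighborFinset v).filter (fun y => ¬ T.degree y = 1), f x =
          -(((T.neighborFinset v).filter (fun y => ¬ T.degree y = 1)).card : ℤ) := by
        have h : ∀ x ∈ (T.neighborFinset v).filter (fun y => ¬ T.degree y = 1),
            f x = (fun _ : V => (-1 : ℤ)) x := by
          intro x hx
          rw [Finset.mem_filter] at hx
          exact hWneg x hx.1 hx.2
        rw [Finset.sum_congr rfl h, Finset.sum_const]
        simp
      have hLsplit : ∑ x ∈ L, f x = ∑ x ∈ L.filter (fun y => f y = 1), f x +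
          ∑ x ∈ L.filter (fun y => ¬ f y = 1), f x :=
        (Finset.sum_filter_add_sum_filter_not L _ f).symm
      have hLP : L.filter (fun y => f y = 1) = Pn := by
        rw [hL, hPn, Finset.filter_filter]
      have hLpos : ∑ x ∈ L.filter (fun y => f y = 1), f x = (Pn.card : ℤ) := by
        have h : ∀ x ∈ Pn, f x = (fun _ : V => (1 : ℤ)) x := by
          intro x hx
          rw [hPn, Finset.mem_filter] at hx
          exact hx.2.2
        rw [Finset.sum_congr hLP h, Finset.sum_const]
        simp
      have hLneg : ∑ x ∈ L.filter (fun y => ¬ f y = 1), f x =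
          -(((L.filter (fun y => ¬ f y = 1)).card : ℤ)) := by
        have h : ∀ x ∈ L.filter (fun y => ¬ f y = 1), f x = (fun _ : V => (-1 : ℤ)) x := by
          intro x hx
          rw [Finset.mem_filter] at hx
          rcases hf1 x with h | h
          · exact absurd h hx.2
          · exact h
        rw [Finset.sum_congr rfl h, Finset.sum_const]
        simp
      have hcards : (L.filter (fun y => f y = 1)).card +
          (L.filter (fun y => ¬ f y = 1)).card = L.card :=
        Finset.card_filter_add_card_filter_not _
      rw [hLP] at hcards
      have hcards2 : L.card + ((T.neighborFinset v).filter (fun y => ¬ T.degree y = 1)).card =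
          (T.neighborFinset v).card := by
        rw [hL]; exact Finset.card_filter_add_card_filter_not _
      have hLd : L.card ≤ (T.neighborFinset v).card := by omega
      rw [hsplit, hLsplit, hcomp, hLpos, hLneg] at hsumv
      -- conclude
      show L.card / 2 ≤ Pn.card
      have : (L.card : ℤ) ≤ 2 * Pn.card + 1 := by
        push_cast at hsumv ⊢
        omega
      omega
  · -- every leaf neighbor of v has value 1
    push_neg at hU
    have : (T.neighborFinset v).filter (fun y => T.degree y = 1 ∧ f y = 1) =
        (T.neighborFinset v).filter (fun y => T.degree y = 1) := by
      apply Finset.filter_congr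
      intro y hy
      simp only [and_iff_left_iff_imp, eq_iff_iff]
      intro hyd
      rcases hf1 y with h | h
      · simp [hyd, h]
      · exact absurd h (hU y hy hyd)
    rw [this]
    exact Nat.div_le_self _ _
end

section
/- Let T be a tree of order n with support vertices v_1, ..., v_s, where v_i is adjacent to ℓ_i leaves. Then γ⁰_st(T) ≥ -n + 2(⌊ℓ_1/2⌋ + ... + ⌊ℓ_s/2⌋). -/
open SimpleGraph Finset

/-- For a tree `T` of order `n` with support vertices `v_1, ..., v_s`, where
`v_i` is adjacent to `ℓ_i` leaves, `γ⁰_st(T) ≥ -n + 2(⌊ℓ_1/2⌋ + ... + ⌊ℓ_s/2⌋)`. -/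
theorem istdn_tree_lower_bound {V : Type*} [Fintype V] [DecidableEq V]
    (T : SimpleGraph V) [DecidableRel T.Adj]
    (hconn : T.Connected) (hacyc : T.IsAcyclic) (hn : 2 ≤ Fintype.card V)
    (g : ℤ)
    (hg : IsGreatest {w : ℤ | ∃ f : V → ℤ,
        (∀ v, f v = 1 ∨ f v = -1) ∧
        (∀ v : V, ∑ u ∈ T.neighborFinset v, f u ≤ 0) ∧
        w = ∑ v, f v} g) :
    -(Fintype.card V : ℤ) +
      2 * ∑ v ∈ Finset.univ.filter (fun v : V => ∃ u ∈ T.neighborFinset v, T.degree u = 1),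
        ((((T.neighborFinset v).filter (fun u => T.degree u = 1)).card / 2 : ℕ) : ℤ)
      ≤ g := by
  classical
  -- leaves adjacent to v
  set L : V → Finset V := fun v => (T.neighborFinset v).filter (fun u => T.degree u = 1)
    with hLdef
  -- choose ⌊ℓ_v/2⌋ leaves for each v
  have hAex : ∀ v : V, ∃ t ⊆ L v, t.card = (L v).card / 2 := fun v =>
    Finset.exists_subset_card_eq (Nat.div_le_self _ _)
  choose A hAsub hAcard using hAex
  have hAmem : ∀ v u : V, u ∈ A v → T.Adj v u ∧ T.degree u = 1 := by
    intro v u hu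
    have := hAsub v hu
    simp only [hLdef, Finset.mem_filter, SimpleGraph.mem_neighborFinset] at this
    exact this
  have huniq : ∀ u v w : V, T.degree u = 1 → T.Adj v u → T.Adj w u → v = w := by
    intro u v w hdeg hv hw
    obtain ⟨a, ha⟩ := Finset.card_eq_one.mp hdeg
    have h1 : v ∈ T.neighborFinset u := by
      simpa [SimpleGraph.mem_neighborFinset] using hv.symm
    have h2 : w ∈ T.neighborFinset u := by
      simpa [SimpleGraph.mem_neighborFinset] using hw.symm
    rw [ha, Finset.mem_singleton] at h1 h2
    exact h1.trans h2.symm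
  have hdisj : ∀ v ∈ (Finset.univ : Finset V), ∀ w ∈ (Finset.univ : Finset V),
      v ≠ w → Disjoint (A v) (A w) := by
    intro v _ w _ hvw
    rw [Finset.disjoint_left]
    intro u huv huw
    obtain ⟨hv, hdeg⟩ := hAmem v u huv
    obtain ⟨hw, -⟩ := hAmem w u huw
    exact hvw (huniq u v w hdeg hv hw)
  set P : Finset V := Finset.univ.biUnion A with hPdef
  have hkey : ∀ u v : V, u ∈ P → T.Adj v u → u ∈ A v := by
    intro u v hu hadj
    obtain ⟨w, -, hw⟩ := Finset.mem_biUnion.mp hu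
    obtain ⟨hwadj, hdeg⟩ := hAmem w u hw
    have : v = w := huniq u v w hdeg hadj hwadj
    rw [this]; exact hw
  set f : V → ℤ := fun u => if u ∈ P then 1 else -1 with hfdef
  -- generic sum formula
  have hsum : ∀ s : Finset V, ∑ u ∈ s, f u
      = 2 * ((s.filter (fun u => u ∈ P)).card : ℤ) - (s.card : ℤ) := by
    intro s
    rw [hfdef]
    rw [Finset.sum_ite, Finset.sum_const, Finset.sum_const]
    have := Finset.card_filter_add_card_filter_not (s := s)
      (p := fun u => u ∈ P)
    push_cast
    have h2 := this
    push_cast at h2 ⊢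
    simp only [nsmul_eq_mul, mul_one, mul_neg] at *
    omega
  -- neighborhood condition
  have hnb : ∀ v : V, ∑ u ∈ T.neighborFinset v, f u ≤ 0 := by
    intro v
    rw [hsum (T.neighborFinset v)]
    have hsubA : (T.neighborFinset v).filter (fun u => u ∈ P) ⊆ A v := by
      intro u hu
      rw [Finset.mem_filter, SimpleGraph.mem_neighborFinset] at hu
      exact hkey u v hu.2 hu.1
    have hc : ((T.neighborFinset v).filter (fun u => u ∈ P)).card ≤ (L v).card / 2 :=
      le_of_le_of_eq (Finset.card_le_card hsubA) (hAcard v)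
    have hLle : (L v).card ≤ (T.neighborFinset v).card := Finset.card_filter_le _ _
    omega
  -- total weight
  have hcardP : (P.card : ℕ) = ∑ v : V, (L v).card / 2 := by
    rw [hPdef, Finset.card_biUnion hdisj]
    exact Finset.sum_congr rfl fun v _ => hAcard v
  have hweight : ∑ v : V, f v
      = -(Fintype.card V : ℤ) + 2 * ∑ v : V, (((L v).card / 2 : ℕ) : ℤ) := by
    rw [hsum Finset.univ]
    have hfu : (Finset.univ.filter (fun u => u ∈ P)) = P := by
      ext u; simp
    rw [hfu, Finset.card_univ]
    have : (P.card : ℤ) = ∑ v : V, (((L v).card / 2 : ℕ) : ℤ) := by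
      have h := congrArg (Nat.cast : ℕ → ℤ) hcardP
      push_cast at h
      exact h
    rw [this]; ring
  -- restrict sum to support vertices
  have hfiltersum : ∑ v ∈ Finset.univ.filter
        (fun v : V => ∃ u ∈ T.neighborFinset v, T.degree u = 1),
        (((L v).card / 2 : ℕ) : ℤ) = ∑ v : V, (((L v).card / 2 : ℕ) : ℤ) := by
    apply Finset.sum_subset (Finset.filter_subset _ _)
    intro v _ hv
    simp only [Finset.mem_filter, Finset.mem_univ, true_and, not_exists] at hv
    have hLv : L v = ∅ := by
      rw [hLdef]
      rw [Finset.filter_eq_empty_iff]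
      intro u hu h1
      exact hv u ⟨hu, h1⟩
    rw [hLv]
    simp
  have hmem : (∑ v : V, f v) ∈ {w : ℤ | ∃ f : V → ℤ,
      (∀ v, f v = 1 ∨ f v = -1) ∧
      (∀ v : V, ∑ u ∈ T.neighborFinset v, f u ≤ 0) ∧
      w = ∑ v, f v} := by
    refine ⟨f, fun v => ?_, hnb, rfl⟩
    rw [hfdef]
    by_cases h : v ∈ P <;> simp [h]
  have := hg.2 hmem
  calc -(Fintype.card V : ℤ) +
      2 * ∑ v ∈ Finset.univ.filter (fun v : V => ∃ u ∈ T.neighborFinset v, T.degree u = 1),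
        ((((T.neighborFinset v).filter (fun u => T.degree u = 1)).card / 2 : ℕ) : ℤ)
      = ∑ v : V, f v := by rw [hweight, ← hfiltersum]
    _ ≤ g := this
end
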